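/- arXiv:2207.02581 — 4 statements merged into one kernel-verified Lean document; each statement's English description precedes it below -/
import Mathlib

section
/- Let G be a d-regular graph whose normalized Laplacian L_G has eigenvalues 0 ≤ λ₁ ≤ ... ≤ λₙ, and suppose λ_{k+1} ≥ φ²/2 for some φ ∈ (0,1). Let M = I - L_G/2 with eigendecomposition M = UΣUᵀ, and let U_{[k]}Σ_{[k]}U_{[k]}ᵀ be the rank-k truncation keeping the top k eigenvalues of M. Then for every unit vector z ∈ ℝⁿ, (1/2)·zᵀL_G z ≤ 1 - zᵀU_{[k]}Σ_{[k]}U_{[k]}ᵀ z ≤ (3/φ²)·zᵀL_G z. -/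
open Matrix

/-- For a `d`-regular graph whose normalized Laplacian `L` has an
orthonormal eigendecomposition `L = U (diagonal lam) Uᵀ` with eigenvalues
`0 ≤ lam 0 ≤ … ≤ lam (n-1) ≤ 2` and `lam (k+1) ≥ φ²/2` (0-indexed: `lam ⟨k,_⟩`),
letting `M = I - L/2` and `Mk` the rank-`k` truncation keeping the top `k` eigenvalues
of `M`, every unit vector `z` satisfies
`(1/2)·zᵀLz ≤ 1 - zᵀ Mk z ≤ (3/φ²)·zᵀLz`. -/
theorem stmt0 (n k : ℕ) (φ : ℝ) (hφ : 0 < φ) (hφ1 : φ < 1) (hk : k < n)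
    (U : Matrix (Fin n) (Fin n) ℝ) (hU : U ∈ Matrix.orthogonalGroup (Fin n) ℝ)
    (lam : Fin n → ℝ) (hlam0 : ∀ i, 0 ≤ lam i) (hlam2 : ∀ i, lam i ≤ 2)
    (hmono : Monotone lam)
    (L : Matrix (Fin n) (Fin n) ℝ)
    (hL : L = U * Matrix.diagonal lam * Uᵀ)
    (hgap : φ ^ 2 / 2 ≤ lam ⟨k, hk⟩)
    (Mk : Matrix (Fin n) (Fin n) ℝ)
    (hMk : Mk = U * Matrix.diagonal (fun i : Fin n => if i.val < k then 1 - lam i / 2 else 0) * Uᵀ)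
    (z : Fin n → ℝ) (hz : z ⬝ᵥ z = 1) :
    (1 / 2) * (z ⬝ᵥ L.mulVec z) ≤ 1 - z ⬝ᵥ Mk.mulVec z ∧
      1 - z ⬝ᵥ Mk.mulVec z ≤ (3 / φ ^ 2) * (z ⬝ᵥ L.mulVec z) := by
  have hUUt : U * Uᵀ = 1 := by
    simpa using (Matrix.mem_orthogonalGroup_iff (Fin n) ℝ).mp hU
  set w : Fin n → ℝ := Uᵀ.mulVec z with hw
  have key : ∀ d : Fin n → ℝ,
      z ⬝ᵥ (U * Matrix.diagonal d * Uᵀ).mulVec z = ∑ i, d i * (w i) ^ 2 := by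
    intro d
    rw [← Matrix.mulVec_mulVec, ← Matrix.mulVec_mulVec, Matrix.dotProduct_mulVec,
      ← Matrix.mulVec_transpose]
    simp only [dotProduct, Matrix.mulVec_diagonal, hw]
    exact Finset.sum_congr rfl fun x _ => by ring
  have hww : ∑ i, (w i) ^ 2 = 1 := by
    have : w ⬝ᵥ w = 1 := by
      rw [hw, Matrix.dotProduct_mulVec, ← Matrix.mulVec_transpose, Matrix.mulVec_mulVec,
        Matrix.transpose_transpose, hUUt]
      simpa using hz
    simpa [dotProduct, sq] using this
  have hφ2 : 0 < φ ^ 2 := pow_pos hφ 2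
  have hφ2le : φ ^ 2 ≤ 1 := by nlinarith
  rw [hL, hMk, key, key]
  constructor
  · nth_rewrite 2 [← hww]
    rw [Finset.mul_sum, ← Finset.sum_sub_distrib]
    apply Finset.sum_le_sum
    intro i _
    by_cases h : i.val < k
    · simp only [h, if_true]
      nlinarith [sq_nonneg (w i), hlam0 i]
    · simp only [h, if_false]
      nlinarith [sq_nonneg (w i), hlam2 i, hlam0 i]
  · nth_rewrite 1 [← hww]
    rw [← Finset.sum_sub_distrib, Finset.mul_sum]
    apply Finset.sum_le_sum
    intro i _
    by_cases h : i.val < k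
    · simp only [h, if_true]
      rw [div_mul_eq_mul_div, le_div_iff₀ hφ2]
      nlinarith [sq_nonneg (w i), hlam0 i,
        mul_nonneg (mul_nonneg (hlam0 i) (sq_nonneg (w i))) (by linarith : (0:ℝ) ≤ 1 - φ ^ 2)]
    · simp only [h, if_false]
      have hge : φ ^ 2 / 2 ≤ lam i := by
        refine le_trans hgap (hmono ?_)
        exact Fin.mk_le_of_le_val (le_of_not_gt h)
      rw [div_mul_eq_mul_div, le_div_iff₀ hφ2]
      nlinarith [sq_nonneg (w i)]
end

section
/- Let Q = (V, E, W, w) and Q' = (V, E', W', w) be vertex- and edge-weighted graphs on the same vertex set with the same vertex weights. Let α, β > 0 and suppose for every S ⊆ V, W'(S, V∖S) ≤ β·W(S, V∖S) + α. Let T and T' be trees achieving the optimum weighted Dasgupta cost of Q and Q' respectively. Then WCOST_{Q'}(T') ≤ β·WCOST_Q(T) + (α/2)·|V|·‖w‖₁, where ‖w‖₁ = Σ_{x∈V} w(x). -/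
/-- Rooted binary trees with leaves labelled by vertices. -/
inductive BTree (V : Type) where
  | leaf : V → BTree V
  | node : BTree V → BTree V → BTree V

namespace BTree

/-- The set of leaf labels of a tree. -/
def leaves {V : Type} [DecidableEq V] : BTree V → Finset V
  | leaf v => {v}
  | node l r => l.leaves ∪ r.leaves

/-- A tree is proper if no vertex appears as a leaf twice. -/
def Proper {V : Type} [DecidableEq V] : BTree V → Prop
  | leaf _ => True
  | node l r => Disjoint l.leaves r.leaves ∧ l.Proper ∧ r.Proper

end BTree

/-- Total vertex weight of a finite set. -/
noncomputable def wsum {V : Type} [DecidableEq V] (w : V → ℝ) (A : Finset V) : ℝ := ∑ x ∈ A, w x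

/-- `lcaW w T x y` is the total `w`-weight of the leaves of the subtree of `T`
rooted at the lowest common ancestor of the leaves `x` and `y`. -/
noncomputable def lcaW {V : Type} [DecidableEq V] (w : V → ℝ) : BTree V → V → V → ℝ
  | .leaf v => fun x y => if x = v ∧ y = v then w v else 0
  | .node l r => fun x y =>
      if x ∈ l.leaves ∧ y ∈ l.leaves then lcaW w l x y
      else if x ∈ r.leaves ∧ y ∈ r.leaves then lcaW w r x y
      else wsum w (l.leaves ∪ r.leaves)

/-- Weighted Dasgupta cost of the tree `T` for the (symmetric) edge-weight
function `W` and vertex weights `w`: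
`WCOST_Q(T) = Σ_{(x,y)∈E} W(x,y) · Σ_{z∈leaves(T[lca(x,y)])} w(z)`
(each unordered pair is counted once, hence the division by `2`). -/
noncomputable def WCOST {V : Type} [DecidableEq V] [Fintype V] (W : V → V → ℝ) (w : V → ℝ)
    (T : BTree V) : ℝ :=
  (∑ x : V, ∑ y : V, W x y * lcaW w T x y) / 2

/-- Total edge weight across the cut `(A, B)` (each edge counted once when `A`, `B`
are disjoint and `W` is symmetric). -/
noncomputable def cutW {V : Type} [DecidableEq V] (W : V → V → ℝ) (A B : Finset V) : ℝ :=
  ∑ x ∈ A, ∑ y ∈ B, W x y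

namespace Stmt2Aux

set_option linter.unusedSectionVars false

variable {V : Type} [DecidableEq V] [Fintype V]

/-- Dasgupta cost numerator, summed over pairs of leaves of `T`. -/
noncomputable def G (W : V → V → ℝ) (w : V → ℝ) (T : BTree V) : ℝ :=
  ∑ x ∈ T.leaves, ∑ y ∈ T.leaves, W x y * lcaW w T x y

lemma leaves_nonempty (T : BTree V) : T.leaves.Nonempty := by
  induction T with
  | leaf v => exact ⟨v, by simp [BTree.leaves]⟩
  | node l r ihl ihr =>
      obtain ⟨v, hv⟩ := ihl
      exact ⟨v, by simp [BTree.leaves, Finset.mem_union_left _ hv]⟩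

lemma cutW_symm (W : V → V → ℝ) (hWs : ∀ x y, W x y = W y x) (A B : Finset V) :
    cutW W A B = cutW W B A := by
  rw [cutW, cutW, Finset.sum_comm]
  exact Finset.sum_congr rfl fun y _ => Finset.sum_congr rfl fun x _ => hWs x y

lemma cutW_union_right (W : V → V → ℝ) (A B C : Finset V) (h : Disjoint B C) :
    cutW W A (B ∪ C) = cutW W A B + cutW W A C := by
  simp [cutW, Finset.sum_union h, Finset.sum_add_distrib]

lemma cutW_union_left (W : V → V → ℝ) (A B C : Finset V) (h : Disjoint A B) :
    cutW W (A ∪ B) C = cutW W A C + cutW W B C := by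
  simp [cutW, Finset.sum_union h]

/-- The cross-cut between two disjoint sets in terms of global cuts. -/
lemma cut_identity (W : V → V → ℝ) (hWs : ∀ x y, W x y = W y x)
    (L R : Finset V) (h : Disjoint L R) :
    cutW W L R + cutW W R L
      = cutW W L Lᶜ + cutW W R Rᶜ - cutW W (L ∪ R) (L ∪ R)ᶜ := by
  have hdl := Finset.disjoint_left.mp h
  have hL : Lᶜ = R ∪ (L ∪ R)ᶜ := by
    ext x
    simp only [Finset.mem_compl, Finset.mem_union]
    constructor
    · intro hx
      by_cases hr : x ∈ R
      · exact Or.inl hr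
      · exact Or.inr (by tauto)
    · rintro (hx | hx)
      · exact fun hxl => hdl hxl hx
      · tauto
  have hR : Rᶜ = L ∪ (L ∪ R)ᶜ := by
    ext x
    simp only [Finset.mem_compl, Finset.mem_union]
    constructor
    · intro hx
      by_cases hl : x ∈ L
      · exact Or.inl hl
      · exact Or.inr (by tauto)
    · rintro (hx | hx)
      · exact fun hxr => hdl hx hxr
      · tauto
  have hdR : Disjoint R (L ∪ R)ᶜ :=
    Finset.disjoint_left.mpr fun a ha hb => (Finset.mem_compl.mp hb)
      (Finset.mem_union_right _ ha)
  have hdL : Disjoint L (L ∪ R)ᶜ :=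
    Finset.disjoint_left.mpr fun a ha hb => (Finset.mem_compl.mp hb)
      (Finset.mem_union_left _ ha)
  rw [hL, hR, cutW_union_right W L R _ hdR, cutW_union_right W R L _ hdL,
    cutW_union_left W L R _ h]
  ring

/-- Recursion for the cost numerator at an internal node. -/
lemma G_node (W : V → V → ℝ) (w : V → ℝ) (l r : BTree V)
    (hd : Disjoint l.leaves r.leaves) :
    G W w (l.node r) = G W w l + G W w r
      + (cutW W l.leaves r.leaves + cutW W r.leaves l.leaves)
        * wsum w (l.leaves ∪ r.leaves) := by
  have hdl := Finset.disjoint_left.mp hd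
  have hdr := Finset.disjoint_right.mp hd
  have hlv : (l.node r).leaves = l.leaves ∪ r.leaves := rfl
  have eLL : ∑ x ∈ l.leaves, ∑ y ∈ l.leaves, W x y * lcaW w (l.node r) x y = G W w l := by
    refine Finset.sum_congr rfl fun x hx => Finset.sum_congr rfl fun y hy => ?_
    simp [lcaW, hx, hy]
  have eRR : ∑ x ∈ r.leaves, ∑ y ∈ r.leaves, W x y * lcaW w (l.node r) x y = G W w r := by
    refine Finset.sum_congr rfl fun x hx => Finset.sum_congr rfl fun y hy => ?_
    simp [lcaW, hx, hy, hdr hx, hdr hy]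
  have eLR : ∑ x ∈ l.leaves, ∑ y ∈ r.leaves, W x y * lcaW w (l.node r) x y
      = cutW W l.leaves r.leaves * wsum w (l.leaves ∪ r.leaves) := by
    rw [cutW, Finset.sum_mul]
    refine Finset.sum_congr rfl fun x hx => ?_
    rw [Finset.sum_mul]
    refine Finset.sum_congr rfl fun y hy => ?_
    simp [lcaW, hdr hy, hdl hx]
  have eRL : ∑ x ∈ r.leaves, ∑ y ∈ l.leaves, W x y * lcaW w (l.node r) x y
      = cutW W r.leaves l.leaves * wsum w (l.leaves ∪ r.leaves) := by
    rw [cutW, Finset.sum_mul]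
    refine Finset.sum_congr rfl fun x hx => ?_
    rw [Finset.sum_mul]
    refine Finset.sum_congr rfl fun y hy => ?_
    simp [lcaW, hdr hx, hdl hy]
  rw [G, hlv, Finset.sum_union hd]
  simp only [Finset.sum_union hd]
  rw [Finset.sum_add_distrib, Finset.sum_add_distrib, eLL, eRR, eLR, eRL]
  ring

/-- Key inductive estimate: the cost difference plus a telescoping correction term
is bounded by `α · |leaves| · w(leaves)`. -/
lemma key {n : ℕ} (W W' : Fin n → Fin n → ℝ) (w : Fin n → ℝ)
    (hWs : ∀ x y, W x y = W y x) (hW's : ∀ x y, W' x y = W' y x)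
    (hWd : ∀ x, W x x = 0) (hW'd : ∀ x, W' x x = 0)
    (hw : ∀ x, 0 ≤ w x) (α β : ℝ) (hα : 0 < α)
    (hcut : ∀ S : Finset (Fin n), cutW W' S Sᶜ ≤ β * cutW W S Sᶜ + α) :
    ∀ T : BTree (Fin n), T.Proper →
      G W' w T - β * G W w T
        + wsum w T.leaves * (cutW W' T.leaves T.leavesᶜ - β * cutW W T.leaves T.leavesᶜ)
      ≤ α * T.leaves.card * wsum w T.leaves := by
  intro T
  induction T with
  | leaf v =>
      intro _
      have h1 : cutW W' ({v} : Finset (Fin n)) {v}ᶜ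
          - β * cutW W ({v} : Finset (Fin n)) {v}ᶜ ≤ α := by
        linarith [hcut {v}]
      have h2 := mul_le_mul_of_nonneg_left h1 (hw v)
      simp only [BTree.leaves, G, lcaW, wsum, Finset.sum_singleton, Finset.card_singleton]
      simp [hWd, hW'd]
      linarith
  | node l r ihl ihr =>
      rintro ⟨hd, hpl, hpr⟩
      have hl := ihl hpl
      have hr := ihr hpr
      have hlv : (l.node r).leaves = l.leaves ∪ r.leaves := rfl
      have hwsum : wsum w (l.leaves ∪ r.leaves) = wsum w l.leaves + wsum w r.leaves := by
        rw [wsum, Finset.sum_union hd]; rfl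
      have hcard : (((l.leaves ∪ r.leaves)).card : ℝ) = l.leaves.card + r.leaves.card := by
        rw [Finset.card_union_of_disjoint hd]; push_cast; ring
      have hwL : 0 ≤ wsum w l.leaves := Finset.sum_nonneg fun x _ => hw x
      have hwR : 0 ≤ wsum w r.leaves := Finset.sum_nonneg fun x _ => hw x
      have hcL : (1 : ℝ) ≤ l.leaves.card := by
        exact_mod_cast Finset.card_pos.mpr (leaves_nonempty l)
      have hcR : (1 : ℝ) ≤ r.leaves.card := by
        exact_mod_cast Finset.card_pos.mpr (leaves_nonempty r)
      have hidW := cut_identity W hWs l.leaves r.leaves hd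
      have hidW' := cut_identity W' hW's l.leaves r.leaves hd
      have hGn := G_node W w l r hd
      have hG'n := G_node W' w l r hd
      have hdL : cutW W' l.leaves l.leavesᶜ - β * cutW W l.leaves l.leavesᶜ ≤ α := by
        linarith [hcut l.leaves]
      have hdR : cutW W' r.leaves r.leavesᶜ - β * cutW W r.leaves r.leavesᶜ ≤ α := by
        linarith [hcut r.leaves]
      have hx1 := mul_le_mul_of_nonneg_left hdL hwR
      have hx2 := mul_le_mul_of_nonneg_left hdR hwL
      have hx3 : 0 ≤ α * ((r.leaves.card : ℝ) - 1) * wsum w l.leaves :=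
        mul_nonneg (mul_nonneg (le_of_lt hα) (by linarith)) hwL
      have hx4 : 0 ≤ α * ((l.leaves.card : ℝ) - 1) * wsum w r.leaves :=
        mul_nonneg (mul_nonneg (le_of_lt hα) (by linarith)) hwR
      have e1 : (cutW W' l.leaves r.leaves + cutW W' r.leaves l.leaves)
            * (wsum w l.leaves + wsum w r.leaves)
          = (cutW W' l.leaves l.leavesᶜ + cutW W' r.leaves r.leavesᶜ
              - cutW W' (l.leaves ∪ r.leaves) (l.leaves ∪ r.leaves)ᶜ)
            * (wsum w l.leaves + wsum w r.leaves) := by rw [hidW']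
      have e2 : (cutW W l.leaves r.leaves + cutW W r.leaves l.leaves)
            * (wsum w l.leaves + wsum w r.leaves)
          = (cutW W l.leaves l.leavesᶜ + cutW W r.leaves r.leavesᶜ
              - cutW W (l.leaves ∪ r.leaves) (l.leaves ∪ r.leaves)ᶜ)
            * (wsum w l.leaves + wsum w r.leaves) := by rw [hidW]
      rw [hlv, hGn, hG'n, hwsum, hcard]
      rw [e1, e2]
      linarith [hl, hr, hx1, hx2, hx3, hx4]

end Stmt2Aux

/-- Let `Q = (V,E,W,w)` and `Q' = (V,E',W',w)` be vertex- and
edge-weighted graphs on the same vertex set with the same vertex weights. Suppose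
`α, β > 0` and for every `S ⊆ V`, `W'(S, V∖S) ≤ β·W(S, V∖S) + α`. If `T` and `T'`
are optimum weighted Dasgupta trees for `Q` and `Q'` respectively, then
`WCOST_{Q'}(T') ≤ β·WCOST_Q(T) + (α/2)·|V|·‖w‖₁`. -/
theorem stmt2 (n : ℕ) (W W' : Fin n → Fin n → ℝ) (w : Fin n → ℝ)
    (hW0 : ∀ x y, 0 ≤ W x y) (hW'0 : ∀ x y, 0 ≤ W' x y)
    (hWs : ∀ x y, W x y = W y x) (hW's : ∀ x y, W' x y = W' y x)
    (hWd : ∀ x, W x x = 0) (hW'd : ∀ x, W' x x = 0)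
    (hw : ∀ x, 0 ≤ w x)
    (α β : ℝ) (hα : 0 < α) (hβ : 0 < β)
    (hcut : ∀ S : Finset (Fin n), cutW W' S Sᶜ ≤ β * cutW W S Sᶜ + α)
    (T T' : BTree (Fin n))
    (hTl : T.leaves = Finset.univ) (hTp : T.Proper)
    (hT'l : T'.leaves = Finset.univ) (hT'p : T'.Proper)
    (hTopt : ∀ T₂ : BTree (Fin n), T₂.leaves = Finset.univ → T₂.Proper →
      WCOST W w T ≤ WCOST W w T₂)
    (hT'opt : ∀ T₂ : BTree (Fin n), T₂.leaves = Finset.univ → T₂.Proper →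
      WCOST W' w T' ≤ WCOST W' w T₂) :
    WCOST W' w T' ≤ β * WCOST W w T + α / 2 * n * ∑ x, w x := by
  have h1 : WCOST W' w T' ≤ WCOST W' w T := hT'opt T hTl hTp
  have hG' : WCOST W' w T = Stmt2Aux.G W' w T / 2 := by
    rw [WCOST, Stmt2Aux.G, hTl]
  have hG : WCOST W w T = Stmt2Aux.G W w T / 2 := by
    rw [WCOST, Stmt2Aux.G, hTl]
  have hk := Stmt2Aux.key W W' w hWs hW's hWd hW'd hw α β hα hcut T hTp
  rw [hTl] at hk
  have hz : cutW W' (Finset.univ : Finset (Fin n)) Finset.univᶜ = 0 := by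
    simp [cutW]
  have hz' : cutW W (Finset.univ : Finset (Fin n)) Finset.univᶜ = 0 := by
    simp [cutW]
  rw [hz, hz'] at hk
  have hcard : ((Finset.univ : Finset (Fin n)).card : ℝ) = n := by simp
  have hwu : wsum w (Finset.univ : Finset (Fin n)) = ∑ x, w x := rfl
  rw [hcard, hwu] at hk
  simp only [mul_zero, sub_zero, mul_sub, add_zero] at hk
  have hβG : β * WCOST W w T = β * (Stmt2Aux.G W w T / 2) := by rw [hG]
  linarith [hk]
end

section
/- Let Q = (V, E, W_Q, w_Q) be a vertex- and edge-weighted graph with total vertex weight ℓ = Σ_{x∈V} w_Q(x), and let T be a rooted tree whose leaves are V. For each integer s with 0 ≤ s ≤ ℓ, let T(s) be the partition of V into maximal clusters of T of weight at most s, and let W_{T(s)} be the total edge weight crossing the partition T(s). Then WCOST_Q(T) = Σ_{s=0}^{ℓ} W_{T(s)}. -/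
/-- For a vertex- and edge-weighted graph `Q = (V,E,W_Q,w_Q)` with
positive integer vertex weights and total weight `ℓ`, and a rooted tree `T` whose
leaves are `V`, the weighted Dasgupta cost decomposes as
`WCOST_Q(T) = Σ_{s=0}^{ℓ} W_{T(s)}`, where `W_{T(s)}` is the total edge weight
crossing the partition of `V` into maximal clusters of `T` of weight at most `s`
(an edge `(x,y)` crosses `T(s)` iff the weight of the subtree at `lca(x,y)`
exceeds `s`). -/
theorem stmt3 (n : ℕ) (W : Fin n → Fin n → ℝ) (hWs : ∀ x y, W x y = W y x)
    (hWd : ∀ x, W x x = 0) (hW0 : ∀ x y, 0 ≤ W x y)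
    (w : Fin n → ℕ) (hw : ∀ x, 0 < w x)
    (T : BTree (Fin n)) (hTl : T.leaves = Finset.univ) (hTp : T.Proper) :
    WCOST W (fun x => (w x : ℝ)) T =
      ∑ s ∈ Finset.range ((∑ x, w x) + 1),
        (∑ x : Fin n, ∑ y : Fin n,
          if (s : ℝ) < lcaW (fun x => (w x : ℝ)) T x y then W x y else 0) / 2 := by
  classical
  have key : ∀ (Tr : BTree (Fin n)) (x y : Fin n), x ≠ y → x ∈ Tr.leaves → y ∈ Tr.leaves →
      ∃ S ⊆ Tr.leaves, lcaW (fun x => (w x : ℝ)) Tr x y = wsum (fun x => (w x : ℝ)) S := by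
    intro Tr
    induction Tr with
    | leaf v =>
      intro x y hne hx hy
      simp [BTree.leaves] at hx hy
      exact absurd (hx.trans hy.symm) hne
    | node l r ihl ihr =>
      intro x y hne hx hy
      simp only [lcaW]
      by_cases h1 : x ∈ l.leaves ∧ y ∈ l.leaves
      · obtain ⟨S, hS, hE⟩ := ihl x y hne h1.1 h1.2
        exact ⟨S, hS.trans (Finset.subset_union_left), by simp [h1, hE]⟩
      · by_cases h2 : x ∈ r.leaves ∧ y ∈ r.leaves
        · obtain ⟨S, hS, hE⟩ := ihr x y hne h2.1 h2.2
          exact ⟨S, hS.trans (Finset.subset_union_right), by simp [h1, h2, hE]⟩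
        · exact ⟨l.leaves ∪ r.leaves, by simp [BTree.leaves], by simp [h1, h2, BTree.leaves]⟩
  rw [WCOST]
  rw [← Finset.sum_div]
  congr 1
  conv_rhs => rw [Finset.sum_comm]
  apply Finset.sum_congr rfl
  intro x _
  conv_rhs => rw [Finset.sum_comm]
  apply Finset.sum_congr rfl
  intro y _
  by_cases hxy : x = y
  · subst hxy
    simp [hWd]
  · obtain ⟨S, hS, hE⟩ := key T x y hxy (by simp [hTl]) (by simp [hTl])
    have hN : lcaW (fun x => (w x : ℝ)) T x y = ((∑ v ∈ S, w v : ℕ) : ℝ) := by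
      rw [hE, wsum]; push_cast; rfl
    set N : ℕ := ∑ v ∈ S, w v with hNdef
    have hNle : N ≤ ∑ v, w v :=
      Finset.sum_le_sum_of_subset (Finset.subset_univ S)
    rw [hN]
    have : ∀ s ∈ Finset.range ((∑ x, w x) + 1),
        (if (s : ℝ) < (N : ℝ) then W x y else 0) = (if s < N then W x y else 0) := by
      intro s _
      simp [Nat.cast_lt]
    rw [Finset.sum_congr rfl this, ← Finset.sum_filter]
    have hfilt : (Finset.range ((∑ x, w x) + 1)).filter (· < N) = Finset.range N := by
      ext s
      simp only [Finset.mem_filter, Finset.mem_range]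
      constructor
      · exact fun h => h.2
      · exact fun h => ⟨lt_of_lt_of_le h (by omega), h⟩
    rw [hfilt, Finset.sum_const, Finset.card_range, nsmul_eq_mul, mul_comm]
end

section
/- Let G = (V,E) be a d-regular graph admitting a (k,φ,ε)-clustering 𝒞 = (C₁,...,C_k) with ε/φ² smaller than a sufficiently small positive constant, let Q = G/𝒞 be the vertex- and edge-weighted contraction (vertex i has weight |Cᵢ|, edge {i,j} has weight |E(Cᵢ,Cⱼ)|), and let T*_Q and T*_G be optimum (weighted) Dasgupta trees for Q and G respectively. Then COST_G(T*_G) ≤ WCOST_Q(T*_Q) + d·Σ_{i=1}^{k} |Cᵢ|² ≤ O(1/φ)·COST_G(T*_G). -/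
/-- Number of (ordered) edges of `G` running between `A` and `B`; for disjoint
`A`, `B` this is `|E(A,B)|`. -/
def eCount {n : ℕ} (G : SimpleGraph (Fin n)) [DecidableRel G.Adj]
    (A B : Finset (Fin n)) : ℕ :=
  ∑ x ∈ A, ∑ y ∈ B, if G.Adj x y then 1 else 0

/-- Dasgupta cost of the tree `T` for the unweighted graph `G`:
`COST_G(T) = Σ_{{x,y}∈E} |leaves(T[lca(x,y)])|`. -/
noncomputable def COST {n : ℕ} (G : SimpleGraph (Fin n)) [DecidableRel G.Adj] (T : BTree (Fin n)) : ℝ :=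
  (∑ x : Fin n, ∑ y : Fin n,
    (if G.Adj x y then (1 : ℝ) else 0) * lcaW (fun _ => (1 : ℝ)) T x y) / 2

/-- Edge weights of the contraction `Q = G/𝒞`: `W(i,j) = |E(Cᵢ,Cⱼ)|` for `i ≠ j`. -/
noncomputable def contrEdgeW {n k : ℕ} (G : SimpleGraph (Fin n)) [DecidableRel G.Adj]
    (C : Fin k → Finset (Fin n)) : Fin k → Fin k → ℝ :=
  fun i j => if i = j then 0 else (eCount G (C i) (C j) : ℝ)

namespace BTree
variable {V : Type} [DecidableEq V]

theorem leaves_nonempty (T : BTree V) : T.leaves.Nonempty := by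
  induction T with
  | leaf v => exact ⟨v, by simp [leaves]⟩
  | node l r ihl ihr => exact ihl.mono (by simp [leaves, Finset.subset_union_left])

/-- the leaf set of the lca of `x` and `y`. -/
def lcaS : BTree V → V → V → Finset V
  | leaf v => fun x y => if x = v ∧ y = v then {v} else ∅
  | node l r => fun x y =>
      if x ∈ l.leaves ∧ y ∈ l.leaves then lcaS l x y
      else if x ∈ r.leaves ∧ y ∈ r.leaves then lcaS r x y
      else l.leaves ∪ r.leaves

theorem lcaW_eq_wsum_lcaS (w : V → ℝ) (T : BTree V) (x y : V) :
    lcaW w T x y = wsum w (lcaS T x y) := by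
  induction T with
  | leaf v =>
    simp only [lcaW, lcaS]; split_ifs <;> simp [wsum]
  | node l r ihl ihr =>
    simp only [lcaW, lcaS]; split_ifs <;> simp [*]

theorem lcaS_subset_leaves (T : BTree V) (x y : V) : lcaS T x y ⊆ T.leaves := by
  induction T with
  | leaf v => simp only [lcaS]; split_ifs <;> simp [leaves]
  | node l r ihl ihr =>
    simp only [lcaS, leaves]; split_ifs with h1 h2
    · exact (ihl).trans Finset.subset_union_left
    · exact (ihr).trans Finset.subset_union_right
    · exact subset_rfl

theorem lcaS_comm (T : BTree V) (x y : V) : lcaS T x y = lcaS T y x := by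
  induction T with
  | leaf v => simp only [lcaS]; rw [if_congr (and_comm) rfl rfl]
  | node l r ihl ihr =>
    simp only [lcaS]
    rw [if_congr (and_comm) rfl rfl]
    by_cases h1 : y ∈ l.leaves ∧ x ∈ l.leaves
    · rw [if_pos h1, if_pos h1, ihl]
    · rw [if_neg h1, if_neg h1, if_congr (and_comm) rfl rfl]
      by_cases h2 : y ∈ r.leaves ∧ x ∈ r.leaves
      · rw [if_pos h2, if_pos h2, ihr]
      · rw [if_neg h2, if_neg h2]

theorem mem_lcaS_left (T : BTree V) {x y : V} (hx : x ∈ T.leaves) (hy : y ∈ T.leaves) :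
    x ∈ lcaS T x y := by
  induction T with
  | leaf v =>
    simp only [leaves, Finset.mem_singleton] at hx hy
    simp [lcaS, hx, hy]
  | node l r ihl ihr =>
    simp only [lcaS]
    split_ifs with h1 h2
    · exact ihl h1.1 h1.2
    · exact ihr h2.1 h2.2
    · simp only [leaves, Finset.mem_union] at hx ⊢; exact hx

theorem mem_lcaS_right (T : BTree V) {x y : V} (hx : x ∈ T.leaves) (hy : y ∈ T.leaves) :
    y ∈ lcaS T x y := by
  induction T with
  | leaf v =>
    simp only [leaves, Finset.mem_singleton] at hx hy
    simp [lcaS, hx, hy]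
  | node l r ihl ihr =>
    simp only [lcaS]
    split_ifs with h1 h2
    · exact ihl h1.1 h1.2
    · exact ihr h2.1 h2.2
    · simp only [leaves, Finset.mem_union] at hy ⊢; exact hy

/-- Subtree relation (for a proper tree, identifies nodes). -/
inductive Sub : BTree V → BTree V → Prop
  | refl (t : BTree V) : Sub t t
  | left {u l r : BTree V} : Sub u l → Sub u (node l r)
  | right {u l r : BTree V} : Sub u r → Sub u (node l r)

theorem Sub.leaves_subset {u T : BTree V} (h : Sub u T) : u.leaves ⊆ T.leaves := by
  induction h with
  | refl => exact subset_rfl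
  | left _ ih => exact ih.trans (by simp [leaves, Finset.subset_union_left])
  | right _ ih => exact ih.trans (by simp [leaves, Finset.subset_union_right])

theorem Proper.of_sub {u T : BTree V} (hT : T.Proper) (h : Sub u T) : u.Proper := by
  induction h with
  | refl => exact hT
  | left _ ih => exact ih hT.2.1
  | right _ ih => exact ih hT.2.2

/-- laminarity of subtree leaf sets -/
theorem laminar {T u v : BTree V} (hT : T.Proper) (hu : Sub u T) (hv : Sub v T) :
    u.leaves ⊆ v.leaves ∨ v.leaves ⊆ u.leaves ∨ Disjoint u.leaves v.leaves := by
  induction T with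
  | leaf w =>
    cases hu; cases hv; exact Or.inl (le_refl _)
  | node l r ihl ihr =>
    cases hu with
    | refl => exact Or.inr (Or.inl hv.leaves_subset)
    | left hu' =>
      cases hv with
      | refl => exact Or.inl (Sub.leaves_subset (Sub.left hu'))
      | left hv' => exact ihl hT.2.1 hu' hv'
      | right hv' =>
        exact Or.inr (Or.inr (hT.1.mono hu'.leaves_subset hv'.leaves_subset))
    | right hu' =>
      cases hv with
      | refl => exact Or.inl (Sub.leaves_subset (Sub.right hu'))
      | left hv' =>
        exact Or.inr (Or.inr ((hT.1.symm).mono hu'.leaves_subset hv'.leaves_subset))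
      | right hv' => exact ihr hT.2.2 hu' hv'

/-- the lca leaf set is the leaf set of an actual subtree -/
theorem exists_sub_lcaS (T : BTree V) {x y : V} (hx : x ∈ T.leaves) (hy : y ∈ T.leaves) :
    ∃ u, Sub u T ∧ u.leaves = lcaS T x y := by
  induction T with
  | leaf v =>
    refine ⟨leaf v, Sub.refl _, ?_⟩
    simp only [leaves, Finset.mem_singleton] at hx hy
    simp [lcaS, hx, hy, leaves]
  | node l r ihl ihr =>
    simp only [lcaS]
    split_ifs with h1 h2
    · obtain ⟨u, hsub, hu⟩ := ihl h1.1 h1.2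
      exact ⟨u, Sub.left hsub, hu⟩
    · obtain ⟨u, hsub, hu⟩ := ihr h2.1 h2.2
      exact ⟨u, Sub.right hsub, hu⟩
    · exact ⟨node l r, Sub.refl _, by simp [leaves]⟩

/-- if a subtree contains both x and y, it contains their (global) lca set -/
theorem lcaS_subset_of_sub {T u : BTree V} (hT : T.Proper) (hsub : Sub u T) {x y : V}
    (hx : x ∈ u.leaves) (hy : y ∈ u.leaves) : lcaS T x y ⊆ u.leaves := by
  induction T with
  | leaf v =>
    cases hsub; exact lcaS_subset_leaves _ _ _
  | node l r ihl ihr =>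
    cases hsub with
    | refl => exact lcaS_subset_leaves _ _ _
    | left hsub' =>
      have hxl : x ∈ l.leaves := hsub'.leaves_subset hx
      have hyl : y ∈ l.leaves := hsub'.leaves_subset hy
      have h : lcaS (node l r) x y = lcaS l x y := by simp [lcaS, hxl, hyl]
      rw [h]; exact ihl hT.2.1 hsub'
    | right hsub' =>
      have hxr : x ∈ r.leaves := hsub'.leaves_subset hx
      have hyr : y ∈ r.leaves := hsub'.leaves_subset hy
      have hxl : x ∉ l.leaves := fun hc => Finset.disjoint_left.mp hT.1 hc hxr
      have h : lcaS (node l r) x y = lcaS r x y := by simp [lcaS, hxl, hxr, hyr]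
      rw [h]; exact ihr hT.2.2 hsub'

/-- the four point lemma: the lca set of `a,b` is inside the union of the lca sets
along the path `a – c – d – b`. -/
theorem lcaS_four (T : BTree V) (hT : T.Proper) {a b c d : V}
    (ha : a ∈ T.leaves) (hb : b ∈ T.leaves) (hc : c ∈ T.leaves) (hd : d ∈ T.leaves) :
    lcaS T a b ⊆ lcaS T a c ∪ lcaS T c d ∪ lcaS T d b := by
  obtain ⟨U, hUs, hU⟩ := exists_sub_lcaS T ha hc
  obtain ⟨P, hPs, hP⟩ := exists_sub_lcaS T hc hd
  obtain ⟨W, hWs, hW⟩ := exists_sub_lcaS T hd hb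
  have haU : a ∈ U.leaves := by rw [hU]; exact mem_lcaS_left T ha hc
  have hcU : c ∈ U.leaves := by rw [hU]; exact mem_lcaS_right T ha hc
  have hcP : c ∈ P.leaves := by rw [hP]; exact mem_lcaS_left T hc hd
  have hdP : d ∈ P.leaves := by rw [hP]; exact mem_lcaS_right T hc hd
  have hdW : d ∈ W.leaves := by rw [hW]; exact mem_lcaS_left T hd hb
  have hbW : b ∈ W.leaves := by rw [hW]; exact mem_lcaS_right T hd hb
  have hUP : U.leaves ⊆ P.leaves ∨ P.leaves ⊆ U.leaves := by
    rcases laminar hT hUs hPs with h | h | h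
    · exact Or.inl h
    · exact Or.inr h
    · exact absurd (Finset.disjoint_left.mp h hcU) (by simp [hcP])
  have hPW : P.leaves ⊆ W.leaves ∨ W.leaves ⊆ P.leaves := by
    rcases laminar hT hPs hWs with h | h | h
    · exact Or.inl h
    · exact Or.inr h
    · exact absurd (Finset.disjoint_left.mp h hdP) (by simp [hdW])
  have key : ∃ X, Sub X T ∧ a ∈ X.leaves ∧ b ∈ X.leaves ∧
      (X.leaves = lcaS T a c ∨ X.leaves = lcaS T c d ∨ X.leaves = lcaS T d b) := by
    rcases hUP with h1 | h1
    · rcases hPW with h2 | h2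
      · exact ⟨W, hWs, h2 (h1 haU), hbW, Or.inr (Or.inr hW)⟩
      · exact ⟨P, hPs, h1 haU, h2 hbW, Or.inr (Or.inl hP)⟩
    · rcases hPW with h2 | h2
      · -- P ⊆ U, P ⊆ W : U and W intersect at c
        have hcW : c ∈ W.leaves := h2 hcP
        have hUW : U.leaves ⊆ W.leaves ∨ W.leaves ⊆ U.leaves := by
          rcases laminar hT hUs hWs with h | h | h
          · exact Or.inl h
          · exact Or.inr h
          · exact absurd (Finset.disjoint_left.mp h hcU) (by simp [hcW])
        rcases hUW with h3 | h3
        · exact ⟨W, hWs, h3 haU, hbW, Or.inr (Or.inr hW)⟩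
        · exact ⟨U, hUs, haU, h3 hbW, Or.inl hU⟩
      · exact ⟨U, hUs, haU, h1 (h2 hbW), Or.inl hU⟩
  obtain ⟨X, hXs, haX, hbX, hX⟩ := key
  have := lcaS_subset_of_sub hT hXs haX hbX
  rcases hX with h | h | h <;> rw [h] at this
  · exact this.trans ((Finset.subset_union_left).trans Finset.subset_union_left)
  · exact this.trans ((Finset.subset_union_right).trans Finset.subset_union_left)
  · exact this.trans Finset.subset_union_right

/-- heavy-descent representative of a cluster `C` in `T`. -/
def rep (C : Finset V) : BTree V → V
  | leaf v => v
  | node l r => if (C ∩ r.leaves).card ≤ (C ∩ l.leaves).card then rep C l else rep C r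

theorem rep_mem_leaves (C : Finset V) (T : BTree V) : rep C T ∈ T.leaves := by
  induction T with
  | leaf v => simp [rep, leaves]
  | node l r ihl ihr =>
    simp only [rep, leaves, Finset.mem_union]
    split_ifs
    · exact Or.inl ihl
    · exact Or.inr ihr

theorem rep_mem (C : Finset V) (T : BTree V) (h : (C ∩ T.leaves).Nonempty) :
    rep C T ∈ C := by
  induction T with
  | leaf v =>
    obtain ⟨x, hx⟩ := h
    simp only [leaves, Finset.mem_inter, Finset.mem_singleton] at hx
    simpa [rep, ← hx.2] using hx.1
  | node l r ihl ihr =>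
    simp only [leaves, Finset.inter_union_distrib_left] at h
    simp only [rep]
    split_ifs with hcard
    · refine ihl ?_
      rw [← Finset.card_pos]
      rcases Finset.nonempty_iff_ne_empty.mp h |> fun hne => h with ⟨x, hx⟩
      rcases Finset.mem_union.mp hx with hx' | hx'
      · exact Finset.card_pos.mpr ⟨x, hx'⟩
      · exact lt_of_lt_of_le (Finset.card_pos.mpr ⟨x, hx'⟩) hcard
    · refine ihr ?_
      rw [← Finset.card_pos]
      push_neg at hcard
      omega
  
theorem lcaW_nonneg {w : V → ℝ} (hw : ∀ v, 0 ≤ w v) (T : BTree V) (x y : V) :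
    0 ≤ lcaW w T x y := by
  rw [lcaW_eq_wsum_lcaS]
  exact Finset.sum_nonneg fun v _ => hw v

theorem lcaW_le_wsum {w : V → ℝ} (hw : ∀ v, 0 ≤ w v) (T : BTree V) (x y : V) :
    lcaW w T x y ≤ wsum w T.leaves := by
  rw [lcaW_eq_wsum_lcaS]
  exact Finset.sum_le_sum_of_subset_of_nonneg (lcaS_subset_leaves T x y)
    (fun v _ _ => hw v)

section Prune
open scoped Classical
variable {K : Type} [DecidableEq K] [Fintype K]

/-- prune a tree, keeping only the leaves in the range of `f`, relabelled. -/
noncomputable def prune (f : K → V) : BTree V → Option (BTree K)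
  | leaf v => if h : ∃ i, f i = v then some (leaf h.choose) else none
  | node l r =>
      match prune f l, prune f r with
      | some a, some b => some (node a b)
      | some a, none => some a
      | none, ob => ob

theorem prune_spec (f : K → V) (hf : Function.Injective f) (T : BTree V) :
    (∀ T', prune f T = some T' →
      ((∀ i, i ∈ T'.leaves ↔ f i ∈ T.leaves) ∧ (T.Proper → T'.Proper)))
    ∧ (prune f T = none → ∀ i, f i ∉ T.leaves) := by
  induction T with
  | leaf v =>
    constructor
    · intro T' hT'
      simp only [prune] at hT'
      split_ifs at hT' with h
      · obtain ⟨rfl⟩ := Option.some_injective _ hT'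
        constructor
        · intro i
          simp only [leaves, Finset.mem_singleton]
          constructor
          · rintro rfl; exact h.choose_spec
          · intro hi; exact hf (hi.trans h.choose_spec.symm)
        · intro _; trivial
    · intro hn i hi
      simp only [prune] at hn
      split_ifs at hn with h
      exact h ⟨i, by simpa [leaves, eq_comm] using hi⟩
  | node l r ihl ihr =>
    constructor
    · intro T' hT'
      simp only [prune] at hT'
      rcases hl : prune f l with _ | a <;> rcases hr : prune f r with _ | b <;>
        rw [hl, hr] at hT'
      · exact absurd hT' (by simp)
      · obtain rfl := Option.some_injective _ hT'
        refine ⟨fun i => ?_, fun hp => (ihr.1 b hr).2 hp.2.2⟩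
        have h1 := (ihr.1 b hr).1 i
        have h2 := ihl.2 hl i
        simp only [leaves, Finset.mem_union]
        tauto
      · obtain rfl := Option.some_injective _ hT'
        refine ⟨fun i => ?_, fun hp => (ihl.1 a hl).2 hp.2.1⟩
        have h1 := (ihl.1 a hl).1 i
        have h2 := ihr.2 hr i
        simp only [leaves, Finset.mem_union]
        tauto
      · obtain rfl := Option.some_injective _ hT'
        have ha := ihl.1 a hl
        have hb := ihr.1 b hr
        refine ⟨fun i => ?_, fun hp => ⟨?_, ha.2 hp.2.1, hb.2 hp.2.2⟩⟩
        · simp only [leaves, Finset.mem_union, ha.1, hb.1]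
        · rw [Finset.disjoint_left]
          intro i hia hib
          exact Finset.disjoint_left.mp hp.1 ((ha.1 i).mp hia) ((hb.1 i).mp hib)
    · intro hn i
      simp only [prune] at hn
      rcases hl : prune f l with _ | a <;> rcases hr : prune f r with _ | b <;>
        rw [hl, hr] at hn <;> simp only [leaves, Finset.mem_union] <;>
        first
        | (push_neg; exact ⟨ihl.2 hl i, ihr.2 hr i⟩)
        | exact absurd hn (by simp)

theorem prune_lcaW_le (f : K → V) (hf : Function.Injective f) (m : K → ℝ)
    (hm : ∀ i, 0 ≤ m i) (T : BTree V) (hT : T.Proper) {i j : K} (hij : i ≠ j)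
    (hi : f i ∈ T.leaves) (hj : f j ∈ T.leaves) {T' : BTree K}
    (h : prune f T = some T') :
    lcaW m T' i j ≤ ∑ ℓ : K, (if f ℓ ∈ lcaS T (f i) (f j) then m ℓ else 0) := by
  induction T generalizing T' with
  | leaf v =>
    simp only [leaves, Finset.mem_singleton] at hi hj
    exact absurd (hf (hi.trans hj.symm)) hij
  | node l r ihl ihr =>
    have hTl := hT.2.1
    have hTr := hT.2.2
    have hspl := prune_spec f hf l
    have hspr := prune_spec f hf r
    simp only [prune] at h
    have hsum : ∀ (a : BTree K) (b : BTree K), prune f l = some a → prune f r = some b →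
        wsum m (a.leaves ∪ b.leaves) =
          ∑ ℓ : K, (if f ℓ ∈ l.leaves ∪ r.leaves then m ℓ else 0) := by
      intro a b hl hr
      have hset : a.leaves ∪ b.leaves =
          Finset.univ.filter (fun ℓ => f ℓ ∈ l.leaves ∪ r.leaves) := by
        ext ℓ
        simp only [Finset.mem_union, Finset.mem_filter, Finset.mem_univ, true_and,
          (hspl.1 a hl).1 ℓ, (hspr.1 b hr).1 ℓ]
      rw [wsum, hset, ← Finset.sum_filter]
    by_cases hfi : f i ∈ l.leaves <;> by_cases hfj : f j ∈ l.leaves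
    · -- both left
      rcases hl : prune f l with _ | a
      · exact absurd hfi (hspl.2 hl i)
      rw [hl] at h
      have hLS : lcaS (node l r) (f i) (f j) = lcaS l (f i) (f j) := by
        simp [lcaS, hfi, hfj]
      rw [hLS]
      rcases hr : prune f r with _ | b <;> rw [hr] at h <;>
        obtain rfl := Option.some_injective _ h
      · exact ihl hTl hfi hfj hl
      · have h1 : i ∈ a.leaves := ((hspl.1 a hl).1 i).mpr hfi
        have h2 : j ∈ a.leaves := ((hspl.1 a hl).1 j).mpr hfj
        have he : lcaW m (node a b) i j = lcaW m a i j := by simp [lcaW, h1, h2]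
        rw [he]
        exact ihl hTl hfi hfj hl
    · -- i left, j right
      have hfj' : f j ∈ r.leaves := by
        rcases Finset.mem_union.mp hj with h' | h'
        · exact absurd h' hfj
        · exact h'
      rcases hl : prune f l with _ | a
      · exact absurd hfi (hspl.2 hl i)
      rcases hr : prune f r with _ | b
      · exact absurd hfj' (hspr.2 hr j)
      rw [hl, hr] at h
      obtain rfl := Option.some_injective _ h
      have hfir : f i ∉ r.leaves := Finset.disjoint_left.mp hT.1 hfi
      have h1 : j ∉ a.leaves := fun hc => hfj (((hspl.1 a hl).1 j).mp hc)
      have h2 : i ∉ b.leaves := fun hc => hfir (((hspr.1 b hr).1 i).mp hc)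
      have hLS : lcaS (node l r) (f i) (f j) = l.leaves ∪ r.leaves := by
        simp only [lcaS]
        rw [if_neg (by tauto), if_neg (by tauto)]
      have he : lcaW m (node a b) i j = wsum m (a.leaves ∪ b.leaves) := by
        simp only [lcaW]
        rw [if_neg (by tauto), if_neg (by tauto)]
      rw [hLS, he, hsum a b hl hr]
    · -- i right, j left
      have hfi' : f i ∈ r.leaves := by
        rcases Finset.mem_union.mp hi with h' | h'
        · exact absurd h' hfi
        · exact h'
      rcases hl : prune f l with _ | a
      · exact absurd hfj (hspl.2 hl j)
      rcases hr : prune f r with _ | b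
      · exact absurd hfi' (hspr.2 hr i)
      rw [hl, hr] at h
      obtain rfl := Option.some_injective _ h
      have hfjr : f j ∉ r.leaves := Finset.disjoint_left.mp hT.1 hfj
      have h1 : i ∉ a.leaves := fun hc => hfi (((hspl.1 a hl).1 i).mp hc)
      have h2 : j ∉ b.leaves := fun hc => hfjr (((hspr.1 b hr).1 j).mp hc)
      have hLS : lcaS (node l r) (f i) (f j) = l.leaves ∪ r.leaves := by
        simp only [lcaS]
        rw [if_neg (by tauto), if_neg (by tauto)]
      have he : lcaW m (node a b) i j = wsum m (a.leaves ∪ b.leaves) := by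
        simp only [lcaW]
        rw [if_neg (by tauto), if_neg (by tauto)]
      rw [hLS, he, hsum a b hl hr]
    · -- both right
      have hfi' : f i ∈ r.leaves := by
        rcases Finset.mem_union.mp hi with h' | h'
        · exact absurd h' hfi
        · exact h'
      have hfj' : f j ∈ r.leaves := by
        rcases Finset.mem_union.mp hj with h' | h'
        · exact absurd h' hfj
        · exact h'
      rcases hr : prune f r with _ | b
      · exact absurd hfi' (hspr.2 hr i)
      have hLS : lcaS (node l r) (f i) (f j) = lcaS r (f i) (f j) := by
        simp only [lcaS]
        rw [if_neg (by tauto), if_pos ⟨hfi', hfj'⟩]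
      rw [hLS]
      rcases hl : prune f l with _ | a <;> rw [hl, hr] at h <;>
        obtain rfl := Option.some_injective _ h
      · exact ihr hTr hfi' hfj' hr
      · have h1 : i ∉ a.leaves := fun hc => hfi (((hspl.1 a hl).1 i).mp hc)
        have h2 : i ∈ b.leaves := ((hspr.1 b hr).1 i).mpr hfi'
        have h3 : j ∈ b.leaves := ((hspr.1 b hr).1 j).mpr hfj'
        have he : lcaW m (node a b) i j = lcaW m b i j := by
          simp only [lcaW]
          rw [if_neg (by tauto), if_pos ⟨h2, h3⟩]
        rw [he]
        exact ihr hTr hfi' hfj' hr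

end Prune

section Graft
variable {K : Type} [DecidableEq K]

/-- replace each leaf `i` of a tree by the tree `g i`. -/
def graft (g : K → BTree V) : BTree K → BTree V
  | .leaf i => g i
  | .node l r => node (graft g l) (graft g r)

theorem graft_leaves (g : K → BTree V) (tq : BTree K) :
    (graft g tq).leaves = tq.leaves.biUnion (fun i => (g i).leaves) := by
  induction tq with
  | leaf i => simp [graft, leaves]
  | node l r ihl ihr =>
    ext x
    simp only [graft, leaves, Finset.mem_union, Finset.mem_biUnion, ihl, ihr]
    constructor
    · rintro (⟨i, hi, hx⟩ | ⟨i, hi, hx⟩) <;> exact ⟨i, by tauto, hx⟩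
    · rintro ⟨i, hi, hx⟩
      rcases hi with hi | hi
      · exact Or.inl ⟨i, hi, hx⟩
      · exact Or.inr ⟨i, hi, hx⟩

theorem graft_proper (g : K → BTree V) (hg : ∀ i, (g i).Proper)
    (hdisj : ∀ i j, i ≠ j → Disjoint (g i).leaves (g j).leaves)
    (tq : BTree K) (htq : tq.Proper) : (graft g tq).Proper := by
  induction tq with
  | leaf i => exact hg i
  | node l r ihl ihr =>
    refine ⟨?_, ihl htq.2.1, ihr htq.2.2⟩
    rw [Finset.disjoint_left]
    intro x hx hx'
    rw [graft_leaves, Finset.mem_biUnion] at hx hx'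
    obtain ⟨i, hi, hxi⟩ := hx
    obtain ⟨j, hj, hxj⟩ := hx'
    have hij : i ≠ j := fun hc => Finset.disjoint_left.mp htq.1 hi (hc ▸ hj)
    exact Finset.disjoint_left.mp (hdisj i j hij) hxi hxj

theorem mem_graft_of (g : K → BTree V) {tq : BTree K} {i : K} {x : V}
    (hi : i ∈ tq.leaves) (hx : x ∈ (g i).leaves) : x ∈ (graft g tq).leaves := by
  rw [graft_leaves, Finset.mem_biUnion]; exact ⟨i, hi, hx⟩

theorem mem_graft_iff (g : K → BTree V)
    (hdisj : ∀ i j, i ≠ j → Disjoint (g i).leaves (g j).leaves)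
    {tq : BTree K} {i : K} {x : V} (hx : x ∈ (g i).leaves) :
    x ∈ (graft g tq).leaves ↔ i ∈ tq.leaves := by
  rw [graft_leaves, Finset.mem_biUnion]
  constructor
  · rintro ⟨j, hj, hxj⟩
    rcases eq_or_ne i j with rfl | hne
    · exact hj
    · exact absurd hxj (Finset.disjoint_left.mp (hdisj i j hne) hx)
  · intro h; exact ⟨i, h, hx⟩

set_option maxHeartbeats 1000000 in
theorem graft_lcaW_cross (g : K → BTree V) (w : V → ℝ)
    (hdisj : ∀ i j, i ≠ j → Disjoint (g i).leaves (g j).leaves)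
    (tq : BTree K) {i j : K} (hij : i ≠ j) (hi : i ∈ tq.leaves) (hj : j ∈ tq.leaves)
    {x y : V} (hx : x ∈ (g i).leaves) (hy : y ∈ (g j).leaves) :
    lcaW w (graft g tq) x y = lcaW (fun ℓ => wsum w (g ℓ).leaves) tq i j := by
  induction tq with
  | leaf i0 =>
    simp only [leaves, Finset.mem_singleton] at hi hj
    exact absurd (hi.trans hj.symm) hij
  | node l r ihl ihr =>
    have hxl : x ∈ (graft g l).leaves ↔ i ∈ l.leaves := mem_graft_iff g hdisj hx
    have hxr : x ∈ (graft g r).leaves ↔ i ∈ r.leaves := mem_graft_iff g hdisj hx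
    have hyl : y ∈ (graft g l).leaves ↔ j ∈ l.leaves := mem_graft_iff g hdisj hy
    have hyr : y ∈ (graft g r).leaves ↔ j ∈ r.leaves := mem_graft_iff g hdisj hy
    simp only [graft, lcaW]
    by_cases h1 : i ∈ l.leaves ∧ j ∈ l.leaves
    · rw [if_pos ⟨hxl.mpr h1.1, hyl.mpr h1.2⟩, if_pos h1]
      exact ihl h1.1 h1.2
    · have h1' : ¬(x ∈ (graft g l).leaves ∧ y ∈ (graft g l).leaves) := by
        rw [hxl, hyl]; exact h1
      rw [if_neg h1', if_neg h1]
      by_cases h2 : i ∈ r.leaves ∧ j ∈ r.leaves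
      · rw [if_pos ⟨hxr.mpr h2.1, hyr.mpr h2.2⟩, if_pos h2]
        exact ihr h2.1 h2.2
      · have h2' : ¬(x ∈ (graft g r).leaves ∧ y ∈ (graft g r).leaves) := by
          rw [hxr, hyr]; exact h2
        rw [if_neg h2', if_neg h2]
        have hleq : (graft g l).leaves ∪ (graft g r).leaves
            = (l.leaves ∪ r.leaves).biUnion (fun ℓ => (g ℓ).leaves) := by
          have h := graft_leaves g (node l r)
          simpa [graft, leaves] using h
        rw [hleq, wsum, Finset.sum_biUnion (fun a _ b _ hab => hdisj a b hab)]
        rfl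

theorem graft_lcaW_intra (g : K → BTree V) (w : V → ℝ) (hw : ∀ v, 0 ≤ w v)
    (hdisj : ∀ i j, i ≠ j → Disjoint (g i).leaves (g j).leaves)
    (tq : BTree K) {i : K} (hi : i ∈ tq.leaves)
    {x y : V} (hx : x ∈ (g i).leaves) (hy : y ∈ (g i).leaves) :
    lcaW w (graft g tq) x y ≤ wsum w (g i).leaves := by
  induction tq with
  | leaf i0 =>
    simp only [leaves, Finset.mem_singleton] at hi
    subst hi
    exact lcaW_le_wsum hw _ _ _
  | node l r ihl ihr =>
    have hxl : x ∈ (graft g l).leaves ↔ i ∈ l.leaves := mem_graft_iff g hdisj hx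
    have hxr : x ∈ (graft g r).leaves ↔ i ∈ r.leaves := mem_graft_iff g hdisj hx
    have hyl : y ∈ (graft g l).leaves ↔ i ∈ l.leaves := mem_graft_iff g hdisj hy
    have hyr : y ∈ (graft g r).leaves ↔ i ∈ r.leaves := mem_graft_iff g hdisj hy
    simp only [leaves, Finset.mem_union] at hi
    simp only [graft, lcaW]
    rcases hi with hi | hi
    · rw [if_pos ⟨hxl.mpr hi, hyl.mpr hi⟩]
      exact ihl hi
    · by_cases h1 : i ∈ l.leaves
      · rw [if_pos ⟨hxl.mpr h1, hyl.mpr h1⟩]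
        exact ihl h1
      · rw [if_neg (by tauto), if_pos ⟨hxr.mpr hi, hyr.mpr hi⟩]
        exact ihr hi

end Graft

/-- caterpillar tree on a list of vertices -/
def ofList : V → List V → BTree V
  | v, [] => leaf v
  | v, w :: t => node (leaf v) (ofList w t)

theorem ofList_leaves (v : V) (t : List V) : (ofList v t).leaves = (v :: t).toFinset := by
  induction t generalizing v with
  | nil => simp [ofList, leaves]
  | cons w t ih =>
    ext a
    simp [ofList, leaves, ih]
    tauto

theorem ofList_proper (v : V) (t : List V) (h : (v :: t).Nodup) : (ofList v t).Proper := by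
  induction t generalizing v with
  | nil => trivial
  | cons w t ih =>
    refine ⟨?_, trivial, ih w (List.Nodup.of_cons h)⟩
    rw [ofList_leaves]
    simp only [leaves, Finset.disjoint_left, Finset.mem_singleton]
    rintro a rfl ha
    rw [List.mem_toFinset] at ha
    exact (List.nodup_cons.mp h).1 ha

/-- binary tree with leaf set a given nonempty finset -/
noncomputable def treeOf (s : Finset V) (v₀ : V) : BTree V :=
  match s.toList with
  | [] => leaf v₀
  | w :: t => ofList w t

theorem treeOf_spec (s : Finset V) (v₀ : V) (hs : s.Nonempty) :
    (treeOf s v₀).leaves = s ∧ (treeOf s v₀).Proper := by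
  unfold treeOf
  split
  next h => exact absurd (Finset.toList_eq_nil.mp h) (Finset.nonempty_iff_ne_empty.mp hs)
  next w t h =>
    constructor
    · rw [ofList_leaves, ← h, Finset.toList_toFinset]
    · exact ofList_proper _ _ (by rw [← h]; exact s.nodup_toList)

end BTree

open BTree

section Core
variable {N : ℕ} (G : SimpleGraph (Fin N)) [DecidableRel G.Adj]

/-- real-valued adjacency indicator -/
noncomputable def adjR : Fin N → Fin N → ℝ := fun x y => if G.Adj x y then 1 else 0

theorem adjR_nonneg (x y : Fin N) : 0 ≤ adjR G x y := by
  unfold adjR; split_ifs <;> norm_num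

variable (φ : ℝ) (d : ℕ) (C : Finset (Fin N))

/-- **Lemma A**: the mass of a cluster outside a node `u` that still holds the
cluster's heavy-path representative is paid for, up to `1/(φ d)`, by
intra-cluster edges whose lca lies strictly above `u`. -/
theorem lemA
    (hexp : ∀ S ⊆ C, S.Nonempty → 2 * S.card ≤ C.card →
      φ * ((d : ℝ) * S.card) ≤ ∑ x ∈ S, ∑ y ∈ C \ S, adjR G x y)
    (hφ : 0 ≤ φ) :
    ∀ (T : BTree (Fin N)), T.Proper → ∀ (u : BTree (Fin N)), Sub u T →
      rep C T ∈ u.leaves →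
      φ * (d : ℝ) * (((C ∩ T.leaves).card : ℝ) - ((C ∩ u.leaves).card : ℝ)) ≤
      ∑ x ∈ T.leaves \ u.leaves, ∑ y ∈ C,
        (if u.leaves ⊂ lcaS T x y then adjR G x y else 0) := by
  intro T
  induction T with
  | leaf v =>
    intro hT u hsub _
    cases hsub
    simp
  | node l r ihl ihr =>
    intro hT u hsub hrep
    have hdisj := hT.1
    have hTl := hT.2.1
    have hTr := hT.2.2
    -- a few generic facts
    have hNE : ∀ x y : Fin N, 0 ≤ (if u.leaves ⊂ lcaS (node l r) x y then adjR G x y else 0) := by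
      intro x y; split_ifs; exacts [adjR_nonneg G x y, le_refl 0]
    cases hsub with
    | refl =>
      simp
    | left hu =>
      -- u sits in the left subtree
      have hul : u.leaves ⊆ l.leaves := hu.leaves_subset
      -- the representative must descend left
      have hcard : (C ∩ r.leaves).card ≤ (C ∩ l.leaves).card := by
        by_contra hc
        have : rep C (node l r) = rep C r := by
          simp only [rep]; rw [if_neg (by omega)]
        have hmem : rep C (node l r) ∈ r.leaves := this ▸ rep_mem_leaves C r
        exact Finset.disjoint_left.mp hdisj (hul hrep) hmem
      have hrepl : rep C (node l r) = rep C l := by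
        simp only [rep]; rw [if_pos hcard]
      -- cardinal bookkeeping
      have hcapcard : ((C ∩ (node l r).leaves).card : ℝ)
          = ((C ∩ l.leaves).card : ℝ) + ((C ∩ r.leaves).card : ℝ) := by
        have : C ∩ (node l r).leaves = (C ∩ l.leaves) ∪ (C ∩ r.leaves) := by
          simp [leaves, Finset.inter_union_distrib_left]
        rw [this, Finset.card_union_of_disjoint
          (hdisj.mono Finset.inter_subset_right Finset.inter_subset_right)]
        push_cast; ring
      -- split RHS domain
      have hdom : (node l r).leaves \ u.leaves
          = (l.leaves \ u.leaves) ∪ r.leaves := by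
        have h1 : r.leaves \ u.leaves = r.leaves :=
          Finset.sdiff_eq_self_of_disjoint ((hdisj.symm).mono_right hul)
        simp [leaves, Finset.union_sdiff_distrib, h1]
      have hdisj2 : Disjoint (l.leaves \ u.leaves) r.leaves :=
        hdisj.mono_left Finset.sdiff_subset
      rw [hdom, Finset.sum_union hdisj2]
      -- first part: induction hypothesis
      have part1 : φ * (d : ℝ) * (((C ∩ l.leaves).card : ℝ) - ((C ∩ u.leaves).card : ℝ)) ≤
          ∑ x ∈ l.leaves \ u.leaves, ∑ y ∈ C,
            (if u.leaves ⊂ lcaS (node l r) x y then adjR G x y else 0) := by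
        refine (ihl hTl u hu (hrepl ▸ hrep)).trans ?_
        refine Finset.sum_le_sum fun x hx => Finset.sum_le_sum fun y hy => ?_
        have hxl : x ∈ l.leaves := (Finset.mem_sdiff.mp hx).1
        by_cases hyl : y ∈ l.leaves
        · have : lcaS (node l r) x y = lcaS l x y := by simp [lcaS, hxl, hyl]
          rw [this]
        · have hxr : x ∉ r.leaves := Finset.disjoint_left.mp hdisj hxl
          have h1 : lcaS (node l r) x y = l.leaves ∪ r.leaves := by
            simp only [lcaS]
            rw [if_neg (by tauto), if_neg (by tauto)]
          split_ifs with h2 h3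
          · exact le_refl _
          · exfalso
            apply h3
            rw [h1]
            refine Finset.ssubset_def.mpr ⟨hul.trans Finset.subset_union_left, ?_⟩
            intro hcon
            obtain ⟨z, hz⟩ := r.leaves_nonempty
            have hzl : z ∉ l.leaves := Finset.disjoint_right.mp hdisj hz
            exact hzl (hul (hcon (Finset.mem_union_right _ hz)))
          · exact adjR_nonneg G x y
          · exact le_refl _
      -- second part: expander cut of the right block
      have part2 : φ * (d : ℝ) * ((C ∩ r.leaves).card : ℝ) ≤
          ∑ x ∈ r.leaves, ∑ y ∈ C,
            (if u.leaves ⊂ lcaS (node l r) x y then adjR G x y else 0) := by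
        rcases (C ∩ r.leaves).eq_empty_or_nonempty with he | hne
        · rw [he]
          simp only [Finset.card_empty, Nat.cast_zero, mul_zero]
          exact Finset.sum_nonneg fun x _ => Finset.sum_nonneg fun y _ => hNE x y
        · set S := C ∩ r.leaves with hS
          have hSsub : S ⊆ C := Finset.inter_subset_left
          have hScard : 2 * S.card ≤ C.card := by
            have hle : (C ∩ l.leaves).card + (C ∩ r.leaves).card ≤ C.card := by
              rw [← Finset.card_union_of_disjoint
                (hdisj.mono Finset.inter_subset_right Finset.inter_subset_right)]
              exact Finset.card_le_card (Finset.union_subset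
                Finset.inter_subset_left Finset.inter_subset_left)
            have heq : S.card = (C ∩ r.leaves).card := by rw [hS]
            omega
          have hcut := hexp S hSsub hne hScard
          rw [mul_assoc]
          refine hcut.trans ?_
          have hstep : ∀ x ∈ S, ∑ y ∈ C \ S, adjR G x y ≤
              ∑ y ∈ C, (if u.leaves ⊂ lcaS (node l r) x y then adjR G x y else 0) := by
            intro x hxS
            have hxr : x ∈ r.leaves := (Finset.mem_inter.mp hxS).2
            have hxl : x ∉ l.leaves := Finset.disjoint_right.mp hdisj hxr
            refine (Finset.sum_le_sum fun y hy => ?_).trans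
              (Finset.sum_le_sum_of_subset_of_nonneg (Finset.sdiff_subset)
                (fun y _ _ => by
                  split_ifs; exacts [adjR_nonneg G x y, le_refl 0]))
            have hyC : y ∈ C := (Finset.mem_sdiff.mp hy).1
            have hyS : y ∉ S := (Finset.mem_sdiff.mp hy).2
            have hyr : y ∉ r.leaves := fun hc => hyS (Finset.mem_inter.mpr ⟨hyC, hc⟩)
            have h1 : lcaS (node l r) x y = l.leaves ∪ r.leaves := by
              simp only [lcaS]
              rw [if_neg (by tauto), if_neg (by tauto)]
            rw [if_pos]
            rw [h1]
            refine Finset.ssubset_def.mpr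
              ⟨(hul.trans Finset.subset_union_left), fun hcon => ?_⟩
            exact hxl (hul (hcon (Finset.mem_union_right _ hxr)))
          calc ∑ x ∈ S, ∑ y ∈ C \ S, adjR G x y
              ≤ ∑ x ∈ S, ∑ y ∈ C, (if u.leaves ⊂ lcaS (node l r) x y then adjR G x y else 0) :=
                Finset.sum_le_sum hstep
            _ ≤ _ := Finset.sum_le_sum_of_subset_of_nonneg
                (hS ▸ Finset.inter_subset_right)
                (fun x _ _ => Finset.sum_nonneg fun y _ => hNE x y)
      calc φ * (d : ℝ) * (((C ∩ (node l r).leaves).card : ℝ) - ((C ∩ u.leaves).card : ℝ))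
          = φ * (d : ℝ) * (((C ∩ l.leaves).card : ℝ) - ((C ∩ u.leaves).card : ℝ))
            + φ * (d : ℝ) * ((C ∩ r.leaves).card : ℝ) := by rw [hcapcard]; ring
        _ ≤ _ := add_le_add part1 part2
    | right hu =>
      -- u sits in the right subtree: mirror image
      have hul : u.leaves ⊆ r.leaves := hu.leaves_subset
      have hcard : ¬ ((C ∩ r.leaves).card ≤ (C ∩ l.leaves).card) ∨
          rep C (node l r) ∈ r.leaves := Or.inr (hul hrep)
      have hrepr : rep C (node l r) = rep C r := by
        by_cases hc : (C ∩ r.leaves).card ≤ (C ∩ l.leaves).card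
        · exfalso
          have : rep C (node l r) = rep C l := by simp only [rep]; rw [if_pos hc]
          have hmem : rep C (node l r) ∈ l.leaves := this ▸ rep_mem_leaves C l
          exact Finset.disjoint_right.mp hdisj (hul hrep) hmem
        · simp only [rep]; rw [if_neg hc]
      have hcardle : (C ∩ l.leaves).card ≤ (C ∩ r.leaves).card := by
        by_contra hc
        have : (C ∩ r.leaves).card ≤ (C ∩ l.leaves).card := by omega
        have h2 : rep C (node l r) = rep C l := by simp only [rep]; rw [if_pos this]
        have hmem : rep C (node l r) ∈ l.leaves := h2 ▸ rep_mem_leaves C l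
        exact Finset.disjoint_right.mp hdisj (hul hrep) hmem
      have hcapcard : ((C ∩ (node l r).leaves).card : ℝ)
          = ((C ∩ l.leaves).card : ℝ) + ((C ∩ r.leaves).card : ℝ) := by
        have : C ∩ (node l r).leaves = (C ∩ l.leaves) ∪ (C ∩ r.leaves) := by
          simp [leaves, Finset.inter_union_distrib_left]
        rw [this, Finset.card_union_of_disjoint
          (hdisj.mono Finset.inter_subset_right Finset.inter_subset_right)]
        push_cast; ring
      have hdom : (node l r).leaves \ u.leaves
          = l.leaves ∪ (r.leaves \ u.leaves) := by
        have h1 : l.leaves \ u.leaves = l.leaves :=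
          Finset.sdiff_eq_self_of_disjoint (hdisj.mono_right hul)
        simp [leaves, Finset.union_sdiff_distrib, h1]
      have hdisj2 : Disjoint l.leaves (r.leaves \ u.leaves) :=
        hdisj.mono_right Finset.sdiff_subset
      rw [hdom, Finset.sum_union hdisj2]
      have part1 : φ * (d : ℝ) * (((C ∩ r.leaves).card : ℝ) - ((C ∩ u.leaves).card : ℝ)) ≤
          ∑ x ∈ r.leaves \ u.leaves, ∑ y ∈ C,
            (if u.leaves ⊂ lcaS (node l r) x y then adjR G x y else 0) := by
        refine (ihr hTr u hu (hrepr ▸ hrep)).trans ?_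
        refine Finset.sum_le_sum fun x hx => Finset.sum_le_sum fun y hy => ?_
        have hxr : x ∈ r.leaves := (Finset.mem_sdiff.mp hx).1
        have hxl : x ∉ l.leaves := Finset.disjoint_right.mp hdisj hxr
        by_cases hyr : y ∈ r.leaves
        · have hyl : y ∉ l.leaves := Finset.disjoint_right.mp hdisj hyr
          have : lcaS (node l r) x y = lcaS r x y := by
            simp only [lcaS]
            rw [if_neg (by tauto), if_pos ⟨hxr, hyr⟩]
          rw [this]
        · have h1 : lcaS (node l r) x y = l.leaves ∪ r.leaves := by
            simp only [lcaS]
            rw [if_neg (by tauto), if_neg (by tauto)]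
          split_ifs with h2 h3
          · exact le_refl _
          · exfalso
            apply h3
            rw [h1]
            refine Finset.ssubset_def.mpr ⟨hul.trans Finset.subset_union_right, ?_⟩
            intro hcon
            obtain ⟨z, hz⟩ := l.leaves_nonempty
            have hzr : z ∉ r.leaves := Finset.disjoint_left.mp hdisj hz
            exact hzr (hul (hcon (Finset.mem_union_left _ hz)))
          · exact adjR_nonneg G x y
          · exact le_refl _
      have part2 : φ * (d : ℝ) * ((C ∩ l.leaves).card : ℝ) ≤
          ∑ x ∈ l.leaves, ∑ y ∈ C,
            (if u.leaves ⊂ lcaS (node l r) x y then adjR G x y else 0) := by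
        rcases (C ∩ l.leaves).eq_empty_or_nonempty with he | hne
        · rw [he]
          simp only [Finset.card_empty, Nat.cast_zero, mul_zero]
          exact Finset.sum_nonneg fun x _ => Finset.sum_nonneg fun y _ => hNE x y
        · set S := C ∩ l.leaves with hS
          have hSsub : S ⊆ C := Finset.inter_subset_left
          have hScard : 2 * S.card ≤ C.card := by
            have hle : (C ∩ l.leaves).card + (C ∩ r.leaves).card ≤ C.card := by
              rw [← Finset.card_union_of_disjoint
                (hdisj.mono Finset.inter_subset_right Finset.inter_subset_right)]
              exact Finset.card_le_card (Finset.union_subset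
                Finset.inter_subset_left Finset.inter_subset_left)
            have heq : S.card = (C ∩ l.leaves).card := by rw [hS]
            omega
          have hcut := hexp S hSsub hne hScard
          rw [mul_assoc]
          refine hcut.trans ?_
          have hstep : ∀ x ∈ S, ∑ y ∈ C \ S, adjR G x y ≤
              ∑ y ∈ C, (if u.leaves ⊂ lcaS (node l r) x y then adjR G x y else 0) := by
            intro x hxS
            have hxl : x ∈ l.leaves := (Finset.mem_inter.mp hxS).2
            have hxr : x ∉ r.leaves := Finset.disjoint_left.mp hdisj hxl
            refine (Finset.sum_le_sum fun y hy => ?_).trans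
              (Finset.sum_le_sum_of_subset_of_nonneg (Finset.sdiff_subset)
                (fun y _ _ => by
                  split_ifs; exacts [adjR_nonneg G x y, le_refl 0]))
            have hyC : y ∈ C := (Finset.mem_sdiff.mp hy).1
            have hyS : y ∉ S := (Finset.mem_sdiff.mp hy).2
            have hyl : y ∉ l.leaves := fun hc => hyS (Finset.mem_inter.mpr ⟨hyC, hc⟩)
            have h1 : lcaS (node l r) x y = l.leaves ∪ r.leaves := by
              simp only [lcaS]
              rw [if_neg (by tauto), if_neg (by tauto)]
            rw [if_pos]
            rw [h1]
            refine Finset.ssubset_def.mpr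
              ⟨(hul.trans Finset.subset_union_right), fun hcon => ?_⟩
            exact hxr (hul (hcon (Finset.mem_union_left _ hxl)))
          calc ∑ x ∈ S, ∑ y ∈ C \ S, adjR G x y
              ≤ ∑ x ∈ S, ∑ y ∈ C, (if u.leaves ⊂ lcaS (node l r) x y then adjR G x y else 0) :=
                Finset.sum_le_sum hstep
            _ ≤ _ := Finset.sum_le_sum_of_subset_of_nonneg
                (hS ▸ Finset.inter_subset_right)
                (fun x _ _ => Finset.sum_nonneg fun y _ => hNE x y)
      calc φ * (d : ℝ) * (((C ∩ (node l r).leaves).card : ℝ) - ((C ∩ u.leaves).card : ℝ))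
          = φ * (d : ℝ) * ((C ∩ l.leaves).card : ℝ)
            + φ * (d : ℝ) * (((C ∩ r.leaves).card : ℝ) - ((C ∩ u.leaves).card : ℝ)) := by
            rw [hcapcard]; ring
        _ ≤ _ := add_le_add part2 part1

/-- **Lemma B**: total distance (in tree-mass) of cluster vertices from the
cluster representative is paid for by intra-cluster edges. -/
theorem lemB
    (hexp : ∀ S ⊆ C, S.Nonempty → 2 * S.card ≤ C.card →
      φ * ((d : ℝ) * S.card) ≤ ∑ x ∈ S, ∑ y ∈ C \ S, adjR G x y)
    (hφ : 0 ≤ φ) :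
    ∀ (T : BTree (Fin N)), T.Proper →
      φ * (d : ℝ) * (∑ x ∈ C ∩ T.leaves, ((lcaS T (rep C T) x).card : ℝ)) ≤
        φ * (d : ℝ) * ((C ∩ T.leaves).card : ℝ)
        + ∑ x ∈ C ∩ T.leaves, ∑ y ∈ C, adjR G x y * ((lcaS T x y).card : ℝ) := by
  have hA : ∀ x y, 0 ≤ adjR G x y := adjR_nonneg G
  have hterm : ∀ (T : BTree (Fin N)) (x y : Fin N), 0 ≤ adjR G x y * ((lcaS T x y).card : ℝ) :=
    fun T x y => mul_nonneg (hA x y) (by positivity)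
  intro T
  induction T with
  | leaf v =>
    intro _
    by_cases hv : v ∈ C
    · have h1 : C ∩ (leaf v).leaves = {v} := by
        ext z; simp only [leaves, Finset.mem_inter, Finset.mem_singleton]
        constructor
        · exact fun h => h.2
        · rintro rfl; exact ⟨hv, rfl⟩
      rw [h1]
      have h2 : rep C (leaf v) = v := rfl
      rw [h2]
      have h3 : lcaS (leaf v) v v = {v} := by simp [lcaS]
      have h4 : ∑ x ∈ ({v} : Finset (Fin N)), ((lcaS (leaf v) v x).card : ℝ) = 1 := by
        rw [Finset.sum_singleton, h3]; simp
      rw [h4]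
      simp only [Finset.card_singleton, Nat.cast_one, mul_one]
      exact le_add_of_nonneg_right
        (Finset.sum_nonneg fun x _ => Finset.sum_nonneg fun y _ => hterm _ x y)
    · have h1 : C ∩ (leaf v).leaves = ∅ := by
        ext z; simp only [leaves, Finset.mem_inter, Finset.mem_singleton]
        constructor
        · rintro ⟨hz, rfl⟩; exact absurd hz hv
        · exact fun h => absurd h (Finset.notMem_empty z)
      rw [h1]
      simp
  | node l r ihl ihr =>
    intro hT
    have hdisj := hT.1
    have hTl := hT.2.1
    have hTr := hT.2.2
    have hsplitC : C ∩ (node l r).leaves = (C ∩ l.leaves) ∪ (C ∩ r.leaves) := by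
      simp [leaves, Finset.inter_union_distrib_left]
    have hdisjC : Disjoint (C ∩ l.leaves) (C ∩ r.leaves) :=
      hdisj.mono Finset.inter_subset_right Finset.inter_subset_right
    have hcount : ((C ∩ (node l r).leaves).card : ℝ)
        = ((C ∩ l.leaves).card : ℝ) + ((C ∩ r.leaves).card : ℝ) := by
      rw [hsplitC, Finset.card_union_of_disjoint hdisjC]; push_cast; ring
    set cT : ℝ := (((node l r).leaves).card : ℝ) with hcT
    have hcle : ∀ (W : Finset (Fin N)), W ⊆ (node l r).leaves → ((W.card : ℝ)) ≤ cT := by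
      intro W hW; rw [hcT]; exact_mod_cast Finset.card_le_card hW
    by_cases hcard : (C ∩ r.leaves).card ≤ (C ∩ l.leaves).card
    · -- majority left
      have hrepl : rep C (node l r) = rep C l := by simp only [rep]; rw [if_pos hcard]
      have hrepll : rep C l ∈ l.leaves := rep_mem_leaves C l
      -- LHS split
      have hLHSl : ∀ x ∈ C ∩ l.leaves,
          lcaS (node l r) (rep C (node l r)) x = lcaS l (rep C l) x := by
        intro x hx
        rw [hrepl]
        have hxl : x ∈ l.leaves := (Finset.mem_inter.mp hx).2
        simp [lcaS, hrepll, hxl]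
      have hLHSr : ∀ x ∈ C ∩ r.leaves,
          lcaS (node l r) (rep C (node l r)) x = (node l r).leaves := by
        intro x hx
        rw [hrepl]
        have hxr : x ∈ r.leaves := (Finset.mem_inter.mp hx).2
        have hxl : x ∉ l.leaves := Finset.disjoint_right.mp hdisj hxr
        have hrr : rep C l ∉ r.leaves := Finset.disjoint_left.mp hdisj hrepll
        simp only [lcaS, leaves]
        rw [if_neg (by tauto), if_neg (by tauto)]
      rw [hsplitC, Finset.sum_union hdisjC, Finset.sum_union hdisjC]
      have e1 : ∑ x ∈ C ∩ l.leaves, ((lcaS (node l r) (rep C (node l r)) x).card : ℝ)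
          = ∑ x ∈ C ∩ l.leaves, ((lcaS l (rep C l) x).card : ℝ) := by
        refine Finset.sum_congr rfl fun x hx => by rw [hLHSl x hx]
      have e2 : ∑ x ∈ C ∩ r.leaves, ((lcaS (node l r) (rep C (node l r)) x).card : ℝ)
          = ((C ∩ r.leaves).card : ℝ) * cT := by
        rw [Finset.sum_congr rfl fun x hx => by rw [hLHSr x hx]]
        rw [Finset.sum_const, hcT]; push_cast; ring
      rw [e1, e2]
      -- RHS lower bounds
      have claim1 : ∑ x ∈ C ∩ l.leaves, ∑ y ∈ C, adjR G x y * ((lcaS l x y).card : ℝ)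
          ≤ ∑ x ∈ C ∩ l.leaves, ∑ y ∈ C, adjR G x y * ((lcaS (node l r) x y).card : ℝ) := by
        refine Finset.sum_le_sum fun x hx => Finset.sum_le_sum fun y hy => ?_
        have hxl : x ∈ l.leaves := (Finset.mem_inter.mp hx).2
        have hxr : x ∉ r.leaves := Finset.disjoint_left.mp hdisj hxl
        by_cases hyl : y ∈ l.leaves
        · have : lcaS (node l r) x y = lcaS l x y := by simp [lcaS, hxl, hyl]
          rw [this]
        · have h1 : lcaS (node l r) x y = (node l r).leaves := by
            simp only [lcaS, leaves]
            rw [if_neg (by tauto), if_neg (by tauto)]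
          rw [h1]
          refine mul_le_mul_of_nonneg_left ?_ (hA x y)
          exact hcle _ ((lcaS_subset_leaves l x y).trans
            (by simp [leaves, Finset.subset_union_left]))
      have claim2 : φ * (d : ℝ) * ((C ∩ r.leaves).card : ℝ) * cT
          ≤ ∑ x ∈ C ∩ r.leaves, ∑ y ∈ C, adjR G x y * ((lcaS (node l r) x y).card : ℝ) := by
        rcases (C ∩ r.leaves).eq_empty_or_nonempty with he | hne
        · rw [he]
          simp only [Finset.card_empty, Nat.cast_zero, mul_zero, zero_mul]
          exact Finset.sum_nonneg fun x _ => Finset.sum_nonneg fun y _ => hterm _ x y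
        · have hSsub : C ∩ r.leaves ⊆ C := Finset.inter_subset_left
          have hScard : 2 * (C ∩ r.leaves).card ≤ C.card := by
            have hle : (C ∩ l.leaves).card + (C ∩ r.leaves).card ≤ C.card := by
              rw [← Finset.card_union_of_disjoint hdisjC]
              exact Finset.card_le_card (Finset.union_subset
                Finset.inter_subset_left Finset.inter_subset_left)
            omega
          have hcut := hexp _ hSsub hne hScard
          have hcT0 : 0 ≤ cT := by rw [hcT]; positivity
          calc φ * (d : ℝ) * ((C ∩ r.leaves).card : ℝ) * cT
              ≤ (∑ x ∈ C ∩ r.leaves, ∑ y ∈ C \ (C ∩ r.leaves), adjR G x y) * cT := by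
                refine mul_le_mul_of_nonneg_right ?_ hcT0
                calc φ * (d : ℝ) * ((C ∩ r.leaves).card : ℝ)
                    = φ * ((d : ℝ) * ((C ∩ r.leaves).card : ℝ)) := by ring
                  _ ≤ _ := hcut
            _ = ∑ x ∈ C ∩ r.leaves, ∑ y ∈ C \ (C ∩ r.leaves), adjR G x y * cT := by
                rw [Finset.sum_mul]
                exact Finset.sum_congr rfl fun x _ => by rw [Finset.sum_mul]
            _ ≤ ∑ x ∈ C ∩ r.leaves, ∑ y ∈ C \ (C ∩ r.leaves),
                  adjR G x y * ((lcaS (node l r) x y).card : ℝ) := by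
                refine Finset.sum_le_sum fun x hx => Finset.sum_le_sum fun y hy => ?_
                have hxr : x ∈ r.leaves := (Finset.mem_inter.mp hx).2
                have hxl : x ∉ l.leaves := Finset.disjoint_right.mp hdisj hxr
                have hyC : y ∈ C := (Finset.mem_sdiff.mp hy).1
                have hyS : y ∉ C ∩ r.leaves := (Finset.mem_sdiff.mp hy).2
                have hyr : y ∉ r.leaves := fun hc => hyS (Finset.mem_inter.mpr ⟨hyC, hc⟩)
                have h1 : lcaS (node l r) x y = (node l r).leaves := by
                  simp only [lcaS, leaves]
                  rw [if_neg (by tauto), if_neg (by tauto)]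
                rw [h1]
            _ ≤ _ := by
                refine Finset.sum_le_sum fun x hx => ?_
                exact Finset.sum_le_sum_of_subset_of_nonneg Finset.sdiff_subset
                  (fun y _ _ => hterm _ x y)
      -- assemble
      have ih := ihl hTl
      calc φ * (d : ℝ) * (∑ x ∈ C ∩ l.leaves, ((lcaS l (rep C l) x).card : ℝ)
              + ((C ∩ r.leaves).card : ℝ) * cT)
          = φ * (d : ℝ) * (∑ x ∈ C ∩ l.leaves, ((lcaS l (rep C l) x).card : ℝ))
            + φ * (d : ℝ) * ((C ∩ r.leaves).card : ℝ) * cT := by ring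
        _ ≤ (φ * (d : ℝ) * ((C ∩ l.leaves).card : ℝ)
              + ∑ x ∈ C ∩ l.leaves, ∑ y ∈ C, adjR G x y * ((lcaS l x y).card : ℝ))
            + ∑ x ∈ C ∩ r.leaves, ∑ y ∈ C, adjR G x y * ((lcaS (node l r) x y).card : ℝ) :=
            add_le_add ih claim2
        _ ≤ _ := by
            have hcnt2 : ((C ∩ l.leaves ∪ C ∩ r.leaves).card : ℝ)
                = ((C ∩ l.leaves).card : ℝ) + ((C ∩ r.leaves).card : ℝ) := by
              rw [Finset.card_union_of_disjoint hdisjC]; push_cast; ring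
            rw [hcnt2]
            have hd0 : 0 ≤ φ * (d : ℝ) * ((C ∩ r.leaves).card : ℝ) := by positivity
            linarith [claim1]
    · -- majority right (mirror)
      have hrepr : rep C (node l r) = rep C r := by simp only [rep]; rw [if_neg hcard]
      have hreprr : rep C r ∈ r.leaves := rep_mem_leaves C r
      have hreprl : rep C r ∉ l.leaves := Finset.disjoint_right.mp hdisj hreprr
      have hLHSr : ∀ x ∈ C ∩ r.leaves,
          lcaS (node l r) (rep C (node l r)) x = lcaS r (rep C r) x := by
        intro x hx
        rw [hrepr]
        have hxr : x ∈ r.leaves := (Finset.mem_inter.mp hx).2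
        have hxl : x ∉ l.leaves := Finset.disjoint_right.mp hdisj hxr
        simp only [lcaS]
        rw [if_neg (by tauto), if_pos ⟨hreprr, hxr⟩]
      have hLHSl : ∀ x ∈ C ∩ l.leaves,
          lcaS (node l r) (rep C (node l r)) x = (node l r).leaves := by
        intro x hx
        rw [hrepr]
        have hxl : x ∈ l.leaves := (Finset.mem_inter.mp hx).2
        have hxr : x ∉ r.leaves := Finset.disjoint_left.mp hdisj hxl
        simp only [lcaS, leaves]
        rw [if_neg (by tauto), if_neg (by tauto)]
      rw [hsplitC, Finset.sum_union hdisjC, Finset.sum_union hdisjC]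
      have e1 : ∑ x ∈ C ∩ r.leaves, ((lcaS (node l r) (rep C (node l r)) x).card : ℝ)
          = ∑ x ∈ C ∩ r.leaves, ((lcaS r (rep C r) x).card : ℝ) := by
        refine Finset.sum_congr rfl fun x hx => by rw [hLHSr x hx]
      have e2 : ∑ x ∈ C ∩ l.leaves, ((lcaS (node l r) (rep C (node l r)) x).card : ℝ)
          = ((C ∩ l.leaves).card : ℝ) * cT := by
        rw [Finset.sum_congr rfl fun x hx => by rw [hLHSl x hx]]
        rw [Finset.sum_const, hcT]; push_cast; ring
      rw [e1, e2]
      have claim1 : ∑ x ∈ C ∩ r.leaves, ∑ y ∈ C, adjR G x y * ((lcaS r x y).card : ℝ)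
          ≤ ∑ x ∈ C ∩ r.leaves, ∑ y ∈ C, adjR G x y * ((lcaS (node l r) x y).card : ℝ) := by
        refine Finset.sum_le_sum fun x hx => Finset.sum_le_sum fun y hy => ?_
        have hxr : x ∈ r.leaves := (Finset.mem_inter.mp hx).2
        have hxl : x ∉ l.leaves := Finset.disjoint_right.mp hdisj hxr
        by_cases hyr : y ∈ r.leaves
        · have hyl : y ∉ l.leaves := Finset.disjoint_right.mp hdisj hyr
          have : lcaS (node l r) x y = lcaS r x y := by
            simp only [lcaS]
            rw [if_neg (by tauto), if_pos ⟨hxr, hyr⟩]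
          rw [this]
        · have h1 : lcaS (node l r) x y = (node l r).leaves := by
            simp only [lcaS, leaves]
            rw [if_neg (by tauto), if_neg (by tauto)]
          rw [h1]
          refine mul_le_mul_of_nonneg_left ?_ (hA x y)
          exact hcle _ ((lcaS_subset_leaves r x y).trans
            (by simp [leaves, Finset.subset_union_right]))
      have claim2 : φ * (d : ℝ) * ((C ∩ l.leaves).card : ℝ) * cT
          ≤ ∑ x ∈ C ∩ l.leaves, ∑ y ∈ C, adjR G x y * ((lcaS (node l r) x y).card : ℝ) := by
        rcases (C ∩ l.leaves).eq_empty_or_nonempty with he | hne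
        · rw [he]
          simp only [Finset.card_empty, Nat.cast_zero, mul_zero, zero_mul]
          exact Finset.sum_nonneg fun x _ => Finset.sum_nonneg fun y _ => hterm _ x y
        · have hSsub : C ∩ l.leaves ⊆ C := Finset.inter_subset_left
          have hScard : 2 * (C ∩ l.leaves).card ≤ C.card := by
            have hle : (C ∩ l.leaves).card + (C ∩ r.leaves).card ≤ C.card := by
              rw [← Finset.card_union_of_disjoint hdisjC]
              exact Finset.card_le_card (Finset.union_subset
                Finset.inter_subset_left Finset.inter_subset_left)
            omega
          have hcut := hexp _ hSsub hne hScard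
          have hcT0 : 0 ≤ cT := by rw [hcT]; positivity
          calc φ * (d : ℝ) * ((C ∩ l.leaves).card : ℝ) * cT
              ≤ (∑ x ∈ C ∩ l.leaves, ∑ y ∈ C \ (C ∩ l.leaves), adjR G x y) * cT := by
                refine mul_le_mul_of_nonneg_right ?_ hcT0
                calc φ * (d : ℝ) * ((C ∩ l.leaves).card : ℝ)
                    = φ * ((d : ℝ) * ((C ∩ l.leaves).card : ℝ)) := by ring
                  _ ≤ _ := hcut
            _ = ∑ x ∈ C ∩ l.leaves, ∑ y ∈ C \ (C ∩ l.leaves), adjR G x y * cT := by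
                rw [Finset.sum_mul]
                exact Finset.sum_congr rfl fun x _ => by rw [Finset.sum_mul]
            _ ≤ ∑ x ∈ C ∩ l.leaves, ∑ y ∈ C \ (C ∩ l.leaves),
                  adjR G x y * ((lcaS (node l r) x y).card : ℝ) := by
                refine Finset.sum_le_sum fun x hx => Finset.sum_le_sum fun y hy => ?_
                have hxl : x ∈ l.leaves := (Finset.mem_inter.mp hx).2
                have hxr : x ∉ r.leaves := Finset.disjoint_left.mp hdisj hxl
                have hyC : y ∈ C := (Finset.mem_sdiff.mp hy).1
                have hyS : y ∉ C ∩ l.leaves := (Finset.mem_sdiff.mp hy).2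
                have hyl : y ∉ l.leaves := fun hc => hyS (Finset.mem_inter.mpr ⟨hyC, hc⟩)
                have h1 : lcaS (node l r) x y = (node l r).leaves := by
                  simp only [lcaS, leaves]
                  rw [if_neg (by tauto), if_neg (by tauto)]
                rw [h1]
            _ ≤ _ := by
                refine Finset.sum_le_sum fun x hx => ?_
                exact Finset.sum_le_sum_of_subset_of_nonneg Finset.sdiff_subset
                  (fun y _ _ => hterm _ x y)
      have ih := ihr hTr
      calc φ * (d : ℝ) * (((C ∩ l.leaves).card : ℝ) * cT
              + ∑ x ∈ C ∩ r.leaves, ((lcaS r (rep C r) x).card : ℝ))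
          = φ * (d : ℝ) * (∑ x ∈ C ∩ r.leaves, ((lcaS r (rep C r) x).card : ℝ))
            + φ * (d : ℝ) * ((C ∩ l.leaves).card : ℝ) * cT := by ring
        _ ≤ (φ * (d : ℝ) * ((C ∩ r.leaves).card : ℝ)
              + ∑ x ∈ C ∩ r.leaves, ∑ y ∈ C, adjR G x y * ((lcaS r x y).card : ℝ))
            + ∑ x ∈ C ∩ l.leaves, ∑ y ∈ C, adjR G x y * ((lcaS (node l r) x y).card : ℝ) :=
            add_le_add ih claim2
        _ ≤ _ := by
            have hcnt2 : ((C ∩ l.leaves ∪ C ∩ r.leaves).card : ℝ)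
                = ((C ∩ l.leaves).card : ℝ) + ((C ∩ r.leaves).card : ℝ) := by
              rw [Finset.card_union_of_disjoint hdisjC]; push_cast; ring
            rw [hcnt2]
            have hd0 : 0 ≤ φ * (d : ℝ) * ((C ∩ l.leaves).card : ℝ) := by positivity
            linarith [claim1]

/-- **Chain lemma**: the lca sets from the representative form a chain, so their
total size is at least `|C|²/2`. -/
theorem lemChain (T : BTree (Fin N)) (hT : T.Proper) (hC : C ⊆ T.leaves) :
    ((C.card : ℝ)) ^ 2 ≤ 2 * ∑ x ∈ C, ((lcaS T (rep C T) x).card : ℝ) := by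
  classical
  set ρ := rep C T with hρdef
  have hρ : ρ ∈ T.leaves := rep_mem_leaves C T
  have hmemρ : ∀ x ∈ C, ρ ∈ lcaS T ρ x := fun x hx => mem_lcaS_left T hρ (hC hx)
  have hmemx : ∀ x ∈ C, x ∈ lcaS T ρ x := fun x hx => mem_lcaS_right T hρ (hC hx)
  have hnest : ∀ x ∈ C, ∀ x' ∈ C,
      lcaS T ρ x' ⊆ lcaS T ρ x ∨ lcaS T ρ x ⊆ lcaS T ρ x' := by
    intro x hx x' hx'
    obtain ⟨u, hus, hu⟩ := exists_sub_lcaS T hρ (hC hx)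
    obtain ⟨u', hus', hu'⟩ := exists_sub_lcaS T hρ (hC hx')
    rcases laminar hT hus' hus with h | h | h
    · left; rw [← hu, ← hu']; exact h
    · right; rw [← hu, ← hu']; exact h
    · exfalso
      exact Finset.disjoint_left.mp h (hu' ▸ hmemρ x' hx') (hu ▸ hmemρ x hx)
  have hcount : ∀ x ∈ C, ∑ x' ∈ C, (if lcaS T ρ x' ⊆ lcaS T ρ x then (1:ℝ) else 0)
      ≤ ((lcaS T ρ x).card : ℝ) := by
    intro x hx
    rw [Finset.sum_boole]
    have hsub : C.filter (fun x' => lcaS T ρ x' ⊆ lcaS T ρ x) ⊆ lcaS T ρ x := by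
      intro x' hx'
      obtain ⟨hx'C, hs⟩ := Finset.mem_filter.mp hx'
      exact hs (hmemx x' hx'C)
    exact_mod_cast Nat.cast_le.mpr (Finset.card_le_card hsub)
  calc ((C.card : ℝ)) ^ 2 = ∑ x ∈ C, ∑ x' ∈ C, (1:ℝ) := by
        simp [Finset.sum_const]; ring
    _ ≤ ∑ x ∈ C, ∑ x' ∈ C, ((if lcaS T ρ x' ⊆ lcaS T ρ x then (1:ℝ) else 0)
          + (if lcaS T ρ x ⊆ lcaS T ρ x' then (1:ℝ) else 0)) := by
        refine Finset.sum_le_sum fun x hx => Finset.sum_le_sum fun x' hx' => ?_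
        rcases hnest x hx x' hx' with h | h
        · rw [if_pos h]; split_ifs <;> norm_num
        · rw [if_pos h]; split_ifs <;> norm_num
    _ = ∑ x ∈ C, ∑ x' ∈ C, (if lcaS T ρ x' ⊆ lcaS T ρ x then (1:ℝ) else 0)
          + ∑ x ∈ C, ∑ x' ∈ C, (if lcaS T ρ x ⊆ lcaS T ρ x' then (1:ℝ) else 0) := by
        rw [← Finset.sum_add_distrib]
        exact Finset.sum_congr rfl fun x _ => Finset.sum_add_distrib
    _ = 2 * ∑ x ∈ C, ∑ x' ∈ C, (if lcaS T ρ x' ⊆ lcaS T ρ x then (1:ℝ) else 0) := by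
        rw [two_mul]
        congr 1
        rw [Finset.sum_comm]
    _ ≤ 2 * ∑ x ∈ C, ((lcaS T ρ x).card : ℝ) := by
        have := Finset.sum_le_sum hcount
        linarith
end Core

section Partition
variable {n k : ℕ} (C : Fin k → Finset (Fin n))

theorem part_sum (hpart : ∀ v : Fin n, ∃! i, v ∈ C i) (f : Fin n → ℝ) :
    ∑ ℓ : Fin k, ∑ y ∈ C ℓ, f y = ∑ y : Fin n, f y := by
  classical
  rw [← Finset.sum_biUnion]
  · apply Finset.sum_congr _ (fun _ _ => rfl)
    apply Finset.eq_univ_of_forall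
    intro v
    rw [Finset.mem_biUnion]
    obtain ⟨i, hi, _⟩ := hpart v
    exact ⟨i, Finset.mem_univ i, hi⟩
  · intro a _ b _ hab
    show Disjoint (C a) (C b)
    rw [Finset.disjoint_left]
    intro v hva hvb
    obtain ⟨i, _, huniq⟩ := hpart v
    exact hab ((huniq a hva).trans (huniq b hvb).symm)

theorem part_sum2 (hpart : ∀ v : Fin n, ∃! i, v ∈ C i) (f : Fin n → Fin k → ℝ)
    (cl : Fin n → Fin k) (hcl : ∀ v i, v ∈ C i → i = cl v) :
    ∑ ℓ : Fin k, ∑ y ∈ C ℓ, f y ℓ = ∑ y : Fin n, f y (cl y) := by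
  rw [← part_sum C hpart (fun y => f y (cl y))]
  exact Finset.sum_congr rfl fun ℓ _ => Finset.sum_congr rfl
    fun y hy => by rw [← hcl y ℓ hy]

end Partition

set_option maxHeartbeats 2000000 in
/-- There are constants `c₀, c₁ > 0` such that: for every
`d`-regular graph `G` admitting a `(k,φ,ε)`-clustering `𝒞 = (C₁,…,C_k)` with
`k ≥ 2`, `φ ∈ (0,1)` and `ε ≤ c₀·φ²`, letting `Q = G/𝒞` be the weighted
contraction (vertex `i` has weight `|Cᵢ|`, edge `{i,j}` has weight `|E(Cᵢ,Cⱼ)|`),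
and letting `T*_Q`, `T*_G` be optimum (weighted) Dasgupta trees of `Q` and `G`,
`COST_G(T*_G) ≤ WCOST_Q(T*_Q) + d·Σᵢ|Cᵢ|² ≤ (c₁/φ)·COST_G(T*_G)`. -/
theorem stmt9 : ∃ c₀ c₁ : ℝ, 0 < c₀ ∧ 0 < c₁ ∧
    ∀ (n k d : ℕ), 2 ≤ k →
    ∀ (φ ε : ℝ), 0 < φ → φ < 1 → 0 ≤ ε → ε ≤ c₀ * φ ^ 2 →
    ∀ (G : SimpleGraph (Fin n)) (_ : DecidableRel G.Adj),
    G.IsRegularOfDegree d →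
    ∀ (C : Fin k → Finset (Fin n)),
    (∀ v : Fin n, ∃! i, v ∈ C i) →
    (∀ i, (C i).Nonempty) →
    (∀ i, ∀ S ⊆ C i, S.Nonempty → 2 * S.card ≤ (C i).card →
      φ * ((d : ℝ) * S.card) ≤ (eCount G S (C i \ S) : ℝ)) →
    (∀ i, (eCount G (C i) (C i)ᶜ : ℝ) ≤ ε * ((d : ℝ) * (C i).card)) →
    ∀ (TQ : BTree (Fin k)), TQ.leaves = Finset.univ → TQ.Proper →
    (∀ T₂ : BTree (Fin k), T₂.leaves = Finset.univ → T₂.Proper →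
      WCOST (contrEdgeW G C) (fun i => ((C i).card : ℝ)) TQ ≤
        WCOST (contrEdgeW G C) (fun i => ((C i).card : ℝ)) T₂) →
    ∀ (TG : BTree (Fin n)), TG.leaves = Finset.univ → TG.Proper →
    (∀ T₂ : BTree (Fin n), T₂.leaves = Finset.univ → T₂.Proper →
      COST G TG ≤ COST G T₂) →
    COST G TG ≤
        WCOST (contrEdgeW G C) (fun i => ((C i).card : ℝ)) TQ +
          (d : ℝ) * ∑ i : Fin k, ((C i).card : ℝ) ^ 2 ∧
      WCOST (contrEdgeW G C) (fun i => ((C i).card : ℝ)) TQ +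
          (d : ℝ) * ∑ i : Fin k, ((C i).card : ℝ) ^ 2 ≤
        c₁ / φ * COST G TG := by
  classical
  refine ⟨1, 100, by norm_num, by norm_num, ?_⟩
  intro n k d hk φ ε hφ hφ1 hε0 hεle G iG hreg C hpart hCne hexp hsparse
    TQ hTQleaves hTQproper hTQopt TG hTGleaves hTGproper hTGopt
  -- trivial case: no edges
  by_cases hd : d = 0
  · subst hd
    have hnoadj : ∀ x y, ¬ G.Adj x y := by
      intro x y hxy
      have h0 : G.degree x = 0 := hreg x
      have hmem : y ∈ G.neighborFinset x := by
        rw [SimpleGraph.mem_neighborFinset]; exact hxy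
      have : 0 < G.degree x := by
        rw [← SimpleGraph.card_neighborFinset_eq_degree]
        exact Finset.card_pos.mpr ⟨y, hmem⟩
      omega
    have hC0 : COST G TG = 0 := by
      unfold COST
      rw [Finset.sum_eq_zero fun x _ => Finset.sum_eq_zero fun y _ => by
        rw [if_neg (hnoadj x y), zero_mul]]
      norm_num
    have hW0 : ∀ i j, contrEdgeW G C i j = 0 := by
      intro i j
      unfold contrEdgeW eCount
      split_ifs with h
      · rfl
      · rw [Finset.sum_eq_zero fun x _ => Finset.sum_eq_zero fun y _ => by
          rw [if_neg (hnoadj x y)]]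
        norm_num
    have hWC0 : WCOST (contrEdgeW G C) (fun i => ((C i).card : ℝ)) TQ = 0 := by
      unfold WCOST
      rw [Finset.sum_eq_zero fun x _ => Finset.sum_eq_zero fun y _ => by
        rw [hW0 x y, zero_mul]]
      norm_num
    rw [hC0, hWC0]
    norm_num
  -- main case
  have hd1 : 1 ≤ d := Nat.one_le_iff_ne_zero.mpr hd
  have hdR : (1:ℝ) ≤ (d:ℝ) := by exact_mod_cast hd1
  have hdpos : (0:ℝ) < (d:ℝ) := by linarith
  choose cl hclmem hcluniq using hpart
  have hpart' : ∀ v : Fin n, ∃! i, v ∈ C i :=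
    fun v => ⟨cl v, hclmem v, fun j hj => hcluniq v j hj⟩
  set m : Fin k → ℝ := fun i => ((C i).card : ℝ) with hmdef
  have hmnn : ∀ i, 0 ≤ m i := fun i => Nat.cast_nonneg _
  have hxleaves : ∀ x : Fin n, x ∈ TG.leaves := by
    rw [hTGleaves]; exact fun x => Finset.mem_univ x
  have hone : ∀ (T : BTree (Fin n)) (x y : Fin n),
      lcaW (fun _ => (1:ℝ)) T x y = ((lcaS T x y).card : ℝ) := by
    intro T x y; rw [lcaW_eq_wsum_lcaS]; simp [wsum]
  set F : ℝ := ∑ x : Fin n, ∑ y : Fin n, adjR G x y * ((lcaS TG x y).card : ℝ) with hFdef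
  have hCOSTF : COST G TG = F / 2 := by
    unfold COST
    rw [hFdef]
    congr 1
    refine Finset.sum_congr rfl fun x _ => Finset.sum_congr rfl fun y _ => ?_
    rw [hone]
    rfl
  have hF0 : 0 ≤ F := by
    rw [hFdef]
    exact Finset.sum_nonneg fun x _ => Finset.sum_nonneg fun y _ =>
      mul_nonneg (adjR_nonneg G x y) (by positivity)
  have hdegrow : ∀ x : Fin n, ∑ y : Fin n, adjR G x y = (d:ℝ) := by
    intro x
    unfold adjR
    rw [Finset.sum_boole]
    have hfil : (Finset.univ.filter (fun y => G.Adj x y)).card = d := by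
      rw [← SimpleGraph.neighborFinset_eq_filter]
      exact hreg x
    rw [hfil]
  have hdegcol : ∀ y : Fin n, ∑ x : Fin n, adjR G x y = (d:ℝ) := by
    intro y
    rw [← hdegrow y]
    refine Finset.sum_congr rfl fun x _ => ?_
    unfold adjR
    rw [if_congr (G.adj_comm x y) rfl rfl]
  have hcast : ∀ (A B : Finset (Fin n)), ((eCount G A B : ℕ) : ℝ) = ∑ x ∈ A, ∑ y ∈ B, adjR G x y := by
    intro A B
    unfold eCount adjR
    push_cast
    rfl
  have hexpR : ∀ i, ∀ S ⊆ C i, S.Nonempty → 2 * S.card ≤ (C i).card →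
      φ * ((d:ℝ) * S.card) ≤ ∑ x ∈ S, ∑ y ∈ (C i) \ S, adjR G x y := by
    intro i S h1 h2 h3
    have h := hexp i S h1 h2 h3
    rwa [hcast] at h
  set r : Fin k → Fin n := fun i => rep (C i) TG with hrdef
  have hrC : ∀ i, r i ∈ C i := by
    intro i
    apply rep_mem
    rw [hTGleaves, Finset.inter_univ]
    exact hCne i
  have hrinj : Function.Injective r := by
    intro i j hij
    have h1 : i = cl (r i) := hcluniq (r i) i (hrC i)
    have h2 : j = cl (r j) := hcluniq (r j) j (hrC j)
    rw [h1, h2, hij]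
  set Mw : Finset (Fin n) → ℝ := fun L => ∑ ℓ : Fin k, (if r ℓ ∈ L then m ℓ else 0) with hMwdef
  set WW : Finset (Fin n) → ℝ := fun L => ∑ x : Fin n, ∑ y : Fin n,
      (if x ∉ L ∧ L ⊂ lcaS TG x y then adjR G x y else 0) with hWWdef
  have hWW0 : ∀ L, 0 ≤ WW L := by
    intro L
    rw [hWWdef]
    refine Finset.sum_nonneg fun x _ => Finset.sum_nonneg fun y _ => ?_
    split_ifs
    exacts [adjR_nonneg G x y, le_refl 0]
  have hpartLcard : ∀ L : Finset (Fin n), ∑ ℓ : Fin k, ((C ℓ ∩ L).card : ℝ) = (L.card : ℝ) := by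
    intro L
    have h1 : ∀ ℓ, ((C ℓ ∩ L).card : ℝ) = ∑ y ∈ C ℓ, (if y ∈ L then (1:ℝ) else 0) := by
      intro ℓ
      rw [Finset.sum_boole, Finset.filter_mem_eq_inter]
    rw [Finset.sum_congr rfl fun ℓ _ => h1 ℓ, part_sum C hpart']
    rw [Finset.sum_boole, Finset.filter_mem_eq_inter, Finset.univ_inter]
  -- Lemma A aggregated over clusters
  have bound9 : ∀ a b : Fin n, φ * (d:ℝ) * Mw (lcaS TG a b) ≤
      φ * (d:ℝ) * ((lcaS TG a b).card : ℝ) + WW (lcaS TG a b) := by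
    intro a b
    obtain ⟨u, hsub, hu⟩ := exists_sub_lcaS TG (hxleaves a) (hxleaves b)
    set L := lcaS TG a b with hL
    have hper : ∀ ℓ : Fin k, (if r ℓ ∈ L then φ * (d:ℝ) * m ℓ else 0) ≤
        (if r ℓ ∈ L then φ * (d:ℝ) * ((C ℓ ∩ L).card:ℝ) else 0)
        + ∑ x ∈ Finset.univ \ L, ∑ y ∈ C ℓ, (if L ⊂ lcaS TG x y then adjR G x y else 0) := by
      intro ℓ
      have hnn : (0:ℝ) ≤ ∑ x ∈ Finset.univ \ L, ∑ y ∈ C ℓ,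
          (if L ⊂ lcaS TG x y then adjR G x y else 0) := by
        refine Finset.sum_nonneg fun x _ => Finset.sum_nonneg fun y _ => ?_
        split_ifs
        exacts [adjR_nonneg G x y, le_refl 0]
      by_cases hrl : r ℓ ∈ L
      · rw [if_pos hrl, if_pos hrl]
        have hlem := lemA G φ d (C ℓ) (hexpR ℓ) hφ.le TG hTGproper u hsub
          (by rw [hu]; exact hrl)
        rw [hTGleaves, Finset.inter_univ, hu] at hlem
        have hmeq : m ℓ = ((C ℓ).card : ℝ) := rfl
        rw [hmeq]
        linarith [hlem]
      · rw [if_neg hrl, if_neg hrl]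
        linarith [hnn]
    have hsum := Finset.sum_le_sum (fun ℓ (_ : ℓ ∈ Finset.univ) => hper ℓ)
    have hLHS : ∑ ℓ : Fin k, (if r ℓ ∈ L then φ*(d:ℝ)*m ℓ else 0) = φ*(d:ℝ)* Mw L := by
      rw [hMwdef, Finset.mul_sum]
      refine Finset.sum_congr rfl fun ℓ _ => ?_
      split_ifs <;> ring
    have hMID : ∑ ℓ : Fin k, (if r ℓ ∈ L then φ*(d:ℝ)*((C ℓ ∩ L).card:ℝ) else 0)
        ≤ φ*(d:ℝ)*((L.card:ℝ)) := by
      calc ∑ ℓ : Fin k, (if r ℓ ∈ L then φ*(d:ℝ)*((C ℓ ∩ L).card:ℝ) else 0)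
          ≤ ∑ ℓ : Fin k, φ*(d:ℝ)*((C ℓ ∩ L).card:ℝ) := by
            refine Finset.sum_le_sum fun ℓ _ => ?_
            split_ifs
            · exact le_refl _
            · positivity
        _ = φ*(d:ℝ)* ∑ ℓ : Fin k, ((C ℓ ∩ L).card:ℝ) := by rw [Finset.mul_sum]
        _ = φ*(d:ℝ)*((L.card:ℝ)) := by rw [hpartLcard L]
    have hTAIL : ∑ ℓ : Fin k, ∑ x ∈ Finset.univ \ L, ∑ y ∈ C ℓ,
        (if L ⊂ lcaS TG x y then adjR G x y else 0) = WW L := by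
      rw [Finset.sum_comm]
      have hstep : ∀ x : Fin n, ∑ ℓ : Fin k, ∑ y ∈ C ℓ,
          (if L ⊂ lcaS TG x y then adjR G x y else 0)
          = ∑ y : Fin n, (if L ⊂ lcaS TG x y then adjR G x y else 0) := by
        intro x
        exact part_sum C hpart' _
      rw [Finset.sum_congr rfl fun x _ => hstep x]
      rw [hWWdef]
      have hfil : Finset.univ \ L = Finset.univ.filter (fun x => x ∉ L) := by
        ext z; simp
      rw [hfil, Finset.sum_filter]
      refine Finset.sum_congr rfl fun x _ => ?_
      by_cases hxL : x ∉ L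
      · rw [if_pos hxL]
        refine Finset.sum_congr rfl fun y _ => ?_
        by_cases hss : L ⊂ lcaS TG x y
        · rw [if_pos hss, if_pos ⟨hxL, hss⟩]
        · rw [if_neg hss, if_neg (by tauto)]
      · rw [if_neg hxL]
        rw [Finset.sum_eq_zero fun y _ => by rw [if_neg (by tauto)]]
    rw [Finset.sum_add_distrib, hLHS, hTAIL] at hsum
    linarith [hsum, hMID]
  have hpair : ∀ (g : Fin n → Fin n → ℝ),
      (∑ x : Fin n, ∑ y : Fin n, g x y) = ∑ p : Fin n × Fin n, g p.1 p.2 :=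
    fun g => (Fintype.sum_prod_type' (f := g)).symm
  have hmemL : ∀ x y : Fin n, x ∈ lcaS TG x y :=
    fun x y => mem_lcaS_left TG (hxleaves x) (hxleaves y)
  have hmemR : ∀ x y : Fin n, y ∈ lcaS TG x y :=
    fun x y => mem_lcaS_right TG (hxleaves x) (hxleaves y)
  have hFpair : F = ∑ q : Fin n × Fin n, adjR G q.1 q.2 * ((lcaS TG q.1 q.2).card : ℝ) := by
    rw [hFdef]; exact hpair _
  have hWWexp : ∀ L : Finset (Fin n), WW L = ∑ q : Fin n × Fin n,
      (if q.1 ∉ L ∧ L ⊂ lcaS TG q.1 q.2 then adjR G q.1 q.2 else 0) := by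
    intro L; rw [hWWdef]; exact hpair _
  have hsum_ind : ∀ (L : Finset (Fin n)),
      (∑ x : Fin n, (if x ∈ L then (1:ℝ) else 0)) = (L.card : ℝ) := by
    intro L
    rw [Finset.sum_boole, Finset.filter_mem_eq_inter, Finset.univ_inter]
  -- swap bound for the main cross term
  have hWWswap : ∑ x : Fin n, ∑ y : Fin n, adjR G x y * WW (lcaS TG x y) ≤ (d:ℝ) * F := by
    rw [hpair]
    have hexpand : ∀ p : Fin n × Fin n, adjR G p.1 p.2 * WW (lcaS TG p.1 p.2)
        = ∑ q : Fin n × Fin n, adjR G p.1 p.2 *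
          (if q.1 ∉ lcaS TG p.1 p.2 ∧ lcaS TG p.1 p.2 ⊂ lcaS TG q.1 q.2
            then adjR G q.1 q.2 else 0) := by
      intro p
      rw [hWWexp, Finset.mul_sum]
    rw [Finset.sum_congr rfl fun p _ => hexpand p, Finset.sum_comm]
    have hinner : ∀ q : Fin n × Fin n, ∑ p : Fin n × Fin n, adjR G p.1 p.2 *
        (if q.1 ∉ lcaS TG p.1 p.2 ∧ lcaS TG p.1 p.2 ⊂ lcaS TG q.1 q.2
          then adjR G q.1 q.2 else 0)
        ≤ adjR G q.1 q.2 * (((lcaS TG q.1 q.2).card : ℝ) * (d:ℝ)) := by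
      intro q
      have hstep : ∀ p : Fin n × Fin n, adjR G p.1 p.2 *
          (if q.1 ∉ lcaS TG p.1 p.2 ∧ lcaS TG p.1 p.2 ⊂ lcaS TG q.1 q.2
            then adjR G q.1 q.2 else 0)
          ≤ (if p.1 ∈ lcaS TG q.1 q.2 then adjR G p.1 p.2 else 0) * adjR G q.1 q.2 := by
        intro p
        by_cases hc : q.1 ∉ lcaS TG p.1 p.2 ∧ lcaS TG p.1 p.2 ⊂ lcaS TG q.1 q.2
        · rw [if_pos hc, if_pos (hc.2.subset (hmemL p.1 p.2))]
        · rw [if_neg hc, mul_zero]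
          refine mul_nonneg ?_ (adjR_nonneg G _ _)
          split_ifs
          exacts [adjR_nonneg G _ _, le_refl 0]
      calc ∑ p : Fin n × Fin n, adjR G p.1 p.2 *
            (if q.1 ∉ lcaS TG p.1 p.2 ∧ lcaS TG p.1 p.2 ⊂ lcaS TG q.1 q.2
              then adjR G q.1 q.2 else 0)
          ≤ ∑ p : Fin n × Fin n,
              (if p.1 ∈ lcaS TG q.1 q.2 then adjR G p.1 p.2 else 0) * adjR G q.1 q.2 :=
            Finset.sum_le_sum fun p _ => hstep p
        _ = (∑ p : Fin n × Fin n,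
              (if p.1 ∈ lcaS TG q.1 q.2 then adjR G p.1 p.2 else 0)) * adjR G q.1 q.2 := by
            rw [Finset.sum_mul]
        _ = (((lcaS TG q.1 q.2).card : ℝ) * (d:ℝ)) * adjR G q.1 q.2 := by
            congr 1
            rw [← hpair (fun x y => if x ∈ lcaS TG q.1 q.2 then adjR G x y else 0)]
            have hx : ∀ x : Fin n, (∑ y : Fin n, if x ∈ lcaS TG q.1 q.2 then adjR G x y else 0)
                = (if x ∈ lcaS TG q.1 q.2 then (1:ℝ) else 0) * (d:ℝ) := by
              intro x
              by_cases hxm : x ∈ lcaS TG q.1 q.2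
              · rw [if_pos hxm, one_mul, ← hdegrow x]
                exact Finset.sum_congr rfl fun y _ => by rw [if_pos hxm]
              · rw [if_neg hxm, zero_mul]
                exact Finset.sum_eq_zero fun y _ => by rw [if_neg hxm]
            rw [Finset.sum_congr rfl fun x _ => hx x, ← Finset.sum_mul, hsum_ind]
        _ = adjR G q.1 q.2 * (((lcaS TG q.1 q.2).card : ℝ) * (d:ℝ)) := by ring
    calc ∑ q : Fin n × Fin n, ∑ p : Fin n × Fin n, adjR G p.1 p.2 *
          (if q.1 ∉ lcaS TG p.1 p.2 ∧ lcaS TG p.1 p.2 ⊂ lcaS TG q.1 q.2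
            then adjR G q.1 q.2 else 0)
        ≤ ∑ q : Fin n × Fin n, adjR G q.1 q.2 * (((lcaS TG q.1 q.2).card : ℝ) * (d:ℝ)) :=
          Finset.sum_le_sum fun q _ => hinner q
      _ = (d:ℝ) * F := by
          rw [hFpair, Finset.mul_sum]
          exact Finset.sum_congr rfl fun q _ => by ring
  -- swap bound for per-vertex terms
  have hSW : ∀ (Lf : Fin n → Finset (Fin n)), (∀ x, x ∈ Lf x) →
      ∑ x : Fin n, WW (Lf x) ≤ F := by
    intro Lf hLf
    rw [Finset.sum_congr rfl fun x (_ : x ∈ Finset.univ) => hWWexp (Lf x), Finset.sum_comm]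
    have hinner : ∀ q : Fin n × Fin n, ∑ x : Fin n,
        (if q.1 ∉ Lf x ∧ Lf x ⊂ lcaS TG q.1 q.2 then adjR G q.1 q.2 else 0)
        ≤ adjR G q.1 q.2 * ((lcaS TG q.1 q.2).card : ℝ) := by
      intro q
      calc ∑ x : Fin n, (if q.1 ∉ Lf x ∧ Lf x ⊂ lcaS TG q.1 q.2 then adjR G q.1 q.2 else 0)
          ≤ ∑ x : Fin n, (if x ∈ lcaS TG q.1 q.2 then (1:ℝ) else 0) * adjR G q.1 q.2 := by
            refine Finset.sum_le_sum fun x _ => ?_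
            by_cases hc : q.1 ∉ Lf x ∧ Lf x ⊂ lcaS TG q.1 q.2
            · rw [if_pos hc, if_pos (hc.2.subset (hLf x)), one_mul]
            · rw [if_neg hc]
              refine mul_nonneg ?_ (adjR_nonneg G _ _)
              split_ifs <;> norm_num
        _ = ((lcaS TG q.1 q.2).card : ℝ) * adjR G q.1 q.2 := by
            rw [← Finset.sum_mul, hsum_ind]
        _ = adjR G q.1 q.2 * ((lcaS TG q.1 q.2).card : ℝ) := by ring
    calc ∑ q : Fin n × Fin n, ∑ x : Fin n,
          (if q.1 ∉ Lf x ∧ Lf x ⊂ lcaS TG q.1 q.2 then adjR G q.1 q.2 else 0)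
        ≤ ∑ q : Fin n × Fin n, adjR G q.1 q.2 * ((lcaS TG q.1 q.2).card : ℝ) :=
          Finset.sum_le_sum fun q _ => hinner q
      _ = F := hFpair.symm
  set Lx : Fin n → Finset (Fin n) := fun x => lcaS TG (r (cl x)) x with hLxdef
  have hLxmem : ∀ x : Fin n, x ∈ Lx x := fun x => hmemR (r (cl x)) x
  have hLxmem' : ∀ x : Fin n, r (cl x) ∈ Lx x := fun x => hmemL (r (cl x)) x
  -- Lemma B aggregated
  have hsumn : ∑ ℓ : Fin k, ((C ℓ).card : ℝ) = (n : ℝ) := by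
    have h := hpartLcard Finset.univ
    simp only [Finset.inter_univ, Finset.card_univ, Fintype.card_fin] at h
    exact h
  have hBagg : φ*(d:ℝ)*(∑ x : Fin n, ((Lx x).card : ℝ)) ≤ φ*(d:ℝ)*(n:ℝ) + F := by
    have hsplit : ∑ x : Fin n, ((Lx x).card : ℝ)
        = ∑ ℓ : Fin k, ∑ x ∈ C ℓ, ((lcaS TG (r ℓ) x).card : ℝ) := by
      rw [part_sum2 C hpart' (fun x ℓ => ((lcaS TG (r ℓ) x).card : ℝ)) cl
        (fun v i hv => hcluniq v i hv)]
    have hB : ∀ ℓ : Fin k, φ*(d:ℝ)*(∑ x ∈ C ℓ, ((lcaS TG (r ℓ) x).card : ℝ))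
        ≤ φ*(d:ℝ)*((C ℓ).card : ℝ)
          + ∑ x ∈ C ℓ, ∑ y ∈ C ℓ, adjR G x y * ((lcaS TG x y).card : ℝ) := by
      intro ℓ
      have h := lemB G φ d (C ℓ) (hexpR ℓ) hφ.le TG hTGproper
      rwa [hTGleaves, Finset.inter_univ] at h
    have hPAY : ∑ ℓ : Fin k, ∑ x ∈ C ℓ, ∑ y ∈ C ℓ, adjR G x y * ((lcaS TG x y).card : ℝ)
        ≤ F := by
      have h1 : ∀ ℓ : Fin k, ∑ x ∈ C ℓ, ∑ y ∈ C ℓ, adjR G x y * ((lcaS TG x y).card : ℝ)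
          ≤ ∑ x ∈ C ℓ, ∑ y : Fin n, adjR G x y * ((lcaS TG x y).card : ℝ) := by
        intro ℓ
        refine Finset.sum_le_sum fun x _ => ?_
        refine Finset.sum_le_sum_of_subset_of_nonneg (Finset.subset_univ _) fun y _ _ =>
          mul_nonneg (adjR_nonneg G x y) (by positivity)
      refine (Finset.sum_le_sum fun ℓ _ => h1 ℓ).trans ?_
      rw [part_sum C hpart' (fun x => ∑ y : Fin n, adjR G x y * ((lcaS TG x y).card : ℝ))]
    calc φ*(d:ℝ)*(∑ x : Fin n, ((Lx x).card : ℝ))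
        = ∑ ℓ : Fin k, φ*(d:ℝ)*(∑ x ∈ C ℓ, ((lcaS TG (r ℓ) x).card : ℝ)) := by
          rw [hsplit, Finset.mul_sum]
      _ ≤ ∑ ℓ : Fin k, (φ*(d:ℝ)*((C ℓ).card : ℝ)
            + ∑ x ∈ C ℓ, ∑ y ∈ C ℓ, adjR G x y * ((lcaS TG x y).card : ℝ)) :=
          Finset.sum_le_sum fun ℓ _ => hB ℓ
      _ = φ*(d:ℝ)*(∑ ℓ : Fin k, ((C ℓ).card : ℝ))
            + ∑ ℓ : Fin k, ∑ x ∈ C ℓ, ∑ y ∈ C ℓ, adjR G x y * ((lcaS TG x y).card : ℝ) := by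
          rw [Finset.sum_add_distrib, Finset.mul_sum]
      _ ≤ φ*(d:ℝ)*(n:ℝ) + F := by
          rw [hsumn]
          linarith [hPAY]
  -- chain aggregated
  have hChainAgg : φ*(d:ℝ)*(∑ i : Fin k, m i ^ 2) ≤ 2*(φ*(d:ℝ)*(n:ℝ) + F) := by
    have hch : ∀ ℓ : Fin k, m ℓ ^ 2 ≤ 2 * ∑ x ∈ C ℓ, ((lcaS TG (r ℓ) x).card : ℝ) := by
      intro ℓ
      exact lemChain (C ℓ) TG hTGproper (by rw [hTGleaves]; exact Finset.subset_univ _)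
    have hsplit : ∑ x : Fin n, ((Lx x).card : ℝ)
        = ∑ ℓ : Fin k, ∑ x ∈ C ℓ, ((lcaS TG (r ℓ) x).card : ℝ) := by
      rw [part_sum2 C hpart' (fun x ℓ => ((lcaS TG (r ℓ) x).card : ℝ)) cl
        (fun v i hv => hcluniq v i hv)]
    have h1 : φ*(d:ℝ)*(∑ i : Fin k, m i ^ 2)
        ≤ φ*(d:ℝ)*(2 * ∑ x : Fin n, ((Lx x).card : ℝ)) := by
      refine mul_le_mul_of_nonneg_left ?_ (by positivity)
      rw [hsplit, Finset.mul_sum]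
      exact Finset.sum_le_sum fun ℓ _ => hch ℓ
    have h2 : φ*(d:ℝ)*(2 * ∑ x : Fin n, ((Lx x).card : ℝ))
        = 2 * (φ*(d:ℝ)*(∑ x : Fin n, ((Lx x).card : ℝ))) := by ring
    linarith [hBagg]
  -- F dominates d·n
  have hFdn : (d:ℝ) * (n:ℝ) ≤ F := by
    rw [hFdef]
    have h1 : ∀ x : Fin n, (d:ℝ) = ∑ y : Fin n, adjR G x y := fun x => (hdegrow x).symm
    calc (d:ℝ) * (n:ℝ) = ∑ x : Fin n, (d:ℝ) := by
          rw [Finset.sum_const, Finset.card_univ, Fintype.card_fin]; ring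
      _ = ∑ x : Fin n, ∑ y : Fin n, adjR G x y := Finset.sum_congr rfl fun x _ => h1 x
      _ ≤ _ := by
          refine Finset.sum_le_sum fun x _ => Finset.sum_le_sum fun y _ => ?_
          have hcard1 : (1:ℝ) ≤ ((lcaS TG x y).card : ℝ) := by
            have := Finset.card_pos.mpr ⟨x, hmemL x y⟩
            exact_mod_cast this
          nlinarith [adjR_nonneg G x y]
  -- basic Mw facts
  have hMw0 : ∀ L, 0 ≤ Mw L := by
    intro L
    rw [hMwdef]
    refine Finset.sum_nonneg fun ℓ _ => ?_
    split_ifs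
    exacts [hmnn ℓ, le_refl 0]
  have hMwmono : ∀ L L' : Finset (Fin n), L ⊆ L' → Mw L ≤ Mw L' := by
    intro L L' hsub
    rw [hMwdef]
    refine Finset.sum_le_sum fun ℓ _ => ?_
    by_cases hmem : r ℓ ∈ L
    · rw [if_pos hmem, if_pos (hsub hmem)]
    · rw [if_neg hmem]
      split_ifs
      exacts [hmnn ℓ, le_refl 0]
  have hMwsub3 : ∀ A B D : Finset (Fin n), Mw (A ∪ B ∪ D) ≤ Mw A + Mw B + Mw D := by
    intro A B D
    rw [hMwdef]
    simp only []
    rw [← Finset.sum_add_distrib, ← Finset.sum_add_distrib]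
    refine Finset.sum_le_sum fun ℓ _ => ?_
    by_cases hmem : r ℓ ∈ A ∪ B ∪ D
    · rw [if_pos hmem]
      rcases Finset.mem_union.mp hmem with hm | hm
      · rcases Finset.mem_union.mp hm with hm2 | hm2
        · rw [if_pos hm2]
          have h1 : (0:ℝ) ≤ (if r ℓ ∈ B then m ℓ else 0) := by
            split_ifs; exacts [hmnn ℓ, le_refl 0]
          have h2 : (0:ℝ) ≤ (if r ℓ ∈ D then m ℓ else 0) := by
            split_ifs; exacts [hmnn ℓ, le_refl 0]
          linarith
        · rw [if_pos hm2]
          have h1 : (0:ℝ) ≤ (if r ℓ ∈ A then m ℓ else 0) := by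
            split_ifs; exacts [hmnn ℓ, le_refl 0]
          have h2 : (0:ℝ) ≤ (if r ℓ ∈ D then m ℓ else 0) := by
            split_ifs; exacts [hmnn ℓ, le_refl 0]
          linarith
      · rw [if_pos hm]
        have h1 : (0:ℝ) ≤ (if r ℓ ∈ A then m ℓ else 0) := by
          split_ifs; exacts [hmnn ℓ, le_refl 0]
        have h2 : (0:ℝ) ≤ (if r ℓ ∈ B then m ℓ else 0) := by
          split_ifs; exacts [hmnn ℓ, le_refl 0]
        linarith
    · rw [if_neg hmem]
      have h1 : (0:ℝ) ≤ (if r ℓ ∈ A then m ℓ else 0) := by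
        split_ifs; exacts [hmnn ℓ, le_refl 0]
      have h2 : (0:ℝ) ≤ (if r ℓ ∈ B then m ℓ else 0) := by
        split_ifs; exacts [hmnn ℓ, le_refl 0]
      have h3 : (0:ℝ) ≤ (if r ℓ ∈ D then m ℓ else 0) := by
        split_ifs; exacts [hmnn ℓ, le_refl 0]
      linarith
  -- the pruned tree
  rcases hpr : prune r TG with _ | T''
  · exfalso
    exact (prune_spec r hrinj TG).2 hpr ⟨0, by omega⟩ (hxleaves _)
  have hspec := (prune_spec r hrinj TG).1 T'' hpr
  have hT''leaves : T''.leaves = Finset.univ :=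
    Finset.eq_univ_of_forall fun i => (hspec.1 i).mpr (hxleaves _)
  have hT''proper : T''.Proper := hspec.2 hTGproper
  have hWQle : WCOST (contrEdgeW G C) m TQ ≤ WCOST (contrEdgeW G C) m T'' :=
    hTQopt T'' hT''leaves hT''proper
  have hW2 : ∀ T0 : BTree (Fin k), 2 * WCOST (contrEdgeW G C) m T0
      = ∑ i : Fin k, ∑ j : Fin k, contrEdgeW G C i j * lcaW m T0 i j := by
    intro T0
    unfold WCOST
    ring
  have hterm'' : ∀ i j : Fin k, contrEdgeW G C i j * lcaW m T'' i j ≤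
      ∑ x ∈ C i, ∑ y ∈ C j, (if i = j then 0 else adjR G x y * Mw (lcaS TG (r i) (r j))) := by
    intro i j
    by_cases hij : i = j
    · subst hij
      unfold contrEdgeW
      rw [if_pos rfl, zero_mul]
      rw [Finset.sum_eq_zero fun x _ => Finset.sum_eq_zero fun y _ => by rw [if_pos rfl]]
    · unfold contrEdgeW
      rw [if_neg hij]
      have hlca := prune_lcaW_le r hrinj m hmnn TG hTGproper hij (hxleaves _) (hxleaves _) hpr
      have h1 : lcaW m T'' i j ≤ Mw (lcaS TG (r i) (r j)) := by
        simp only [hMwdef]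
        exact hlca
      calc (eCount G (C i) (C j) : ℝ) * lcaW m T'' i j
          ≤ (eCount G (C i) (C j) : ℝ) * Mw (lcaS TG (r i) (r j)) :=
            mul_le_mul_of_nonneg_left h1 (Nat.cast_nonneg _)
        _ = ∑ x ∈ C i, ∑ y ∈ C j, adjR G x y * Mw (lcaS TG (r i) (r j)) := by
            rw [hcast, Finset.sum_mul]
            exact Finset.sum_congr rfl fun x _ => by rw [Finset.sum_mul]
        _ = ∑ x ∈ C i, ∑ y ∈ C j,
              (if i = j then 0 else adjR G x y * Mw (lcaS TG (r i) (r j))) := by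
            refine Finset.sum_congr rfl fun x _ => Finset.sum_congr rfl fun y _ => ?_
            rw [if_neg hij]
  have hreidx : ∑ i : Fin k, ∑ j : Fin k, ∑ x ∈ C i, ∑ y ∈ C j,
        (if i = j then 0 else adjR G x y * Mw (lcaS TG (r i) (r j)))
      = ∑ x : Fin n, ∑ y : Fin n,
        (if cl x = cl y then 0 else adjR G x y * Mw (lcaS TG (r (cl x)) (r (cl y)))) := by
    have h1 : ∀ (i : Fin k) (x : Fin n), ∑ j : Fin k, ∑ y ∈ C j,
        (if i = j then 0 else adjR G x y * Mw (lcaS TG (r i) (r j)))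
        = ∑ y : Fin n, (if i = cl y then 0 else adjR G x y * Mw (lcaS TG (r i) (r (cl y)))) := by
      intro i x
      exact part_sum2 C hpart'
        (fun y j => if i = j then 0 else adjR G x y * Mw (lcaS TG (r i) (r j))) cl
        (fun v j hv => hcluniq v j hv)
    calc ∑ i : Fin k, ∑ j : Fin k, ∑ x ∈ C i, ∑ y ∈ C j,
          (if i = j then 0 else adjR G x y * Mw (lcaS TG (r i) (r j)))
        = ∑ i : Fin k, ∑ x ∈ C i, ∑ y : Fin n,
            (if i = cl y then 0 else adjR G x y * Mw (lcaS TG (r i) (r (cl y)))) := by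
          refine Finset.sum_congr rfl fun i _ => ?_
          rw [Finset.sum_comm]
          exact Finset.sum_congr rfl fun x _ => h1 i x
      _ = _ := part_sum2 C hpart'
            (fun x i => ∑ y : Fin n,
              (if i = cl y then 0 else adjR G x y * Mw (lcaS TG (r i) (r (cl y))))) cl
            (fun v j hv => hcluniq v j hv)
  have hfour : ∀ x y : Fin n,
      (if cl x = cl y then 0 else adjR G x y * Mw (lcaS TG (r (cl x)) (r (cl y))))
      ≤ adjR G x y * (Mw (Lx x) + Mw (lcaS TG x y) + Mw (Lx y)) := by
    intro x y
    have hnn3 : 0 ≤ Mw (Lx x) + Mw (lcaS TG x y) + Mw (Lx y) := by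
      have := hMw0 (Lx x); have := hMw0 (lcaS TG x y); have := hMw0 (Lx y); linarith
    by_cases hxy : cl x = cl y
    · rw [if_pos hxy]
      exact mul_nonneg (adjR_nonneg G x y) hnn3
    · rw [if_neg hxy]
      refine mul_le_mul_of_nonneg_left ?_ (adjR_nonneg G x y)
      have hs := lcaS_four TG hTGproper (hxleaves (r (cl x))) (hxleaves (r (cl y)))
        (hxleaves x) (hxleaves y)
      have hLy : lcaS TG y (r (cl y)) = Lx y := by
        rw [hLxdef]
        exact lcaS_comm TG y (r (cl y))
      calc Mw (lcaS TG (r (cl x)) (r (cl y)))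
          ≤ Mw (lcaS TG (r (cl x)) x ∪ lcaS TG x y ∪ lcaS TG y (r (cl y))) :=
            hMwmono _ _ hs
        _ ≤ Mw (lcaS TG (r (cl x)) x) + Mw (lcaS TG x y) + Mw (lcaS TG y (r (cl y))) :=
            hMwsub3 _ _ _
        _ = Mw (Lx x) + Mw (lcaS TG x y) + Mw (Lx y) := by rw [hLy]
  have hchain2 : 2 * WCOST (contrEdgeW G C) m TQ ≤
      ∑ x : Fin n, ∑ y : Fin n, adjR G x y *
        (Mw (Lx x) + Mw (lcaS TG x y) + Mw (Lx y)) := by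
    calc 2 * WCOST (contrEdgeW G C) m TQ
        ≤ 2 * WCOST (contrEdgeW G C) m T'' := by linarith [hWQle]
      _ = ∑ i : Fin k, ∑ j : Fin k, contrEdgeW G C i j * lcaW m T'' i j := hW2 T''
      _ ≤ ∑ i : Fin k, ∑ j : Fin k, ∑ x ∈ C i, ∑ y ∈ C j,
            (if i = j then 0 else adjR G x y * Mw (lcaS TG (r i) (r j))) :=
          Finset.sum_le_sum fun i _ => Finset.sum_le_sum fun j _ => hterm'' i j
      _ = ∑ x : Fin n, ∑ y : Fin n,
            (if cl x = cl y then 0 else adjR G x y * Mw (lcaS TG (r (cl x)) (r (cl y)))) :=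
          hreidx
      _ ≤ _ := Finset.sum_le_sum fun x _ => Finset.sum_le_sum fun y _ => hfour x y
  -- multiply by φ d and bound the three parts
  have hrowsum : ∀ (g : Fin n → ℝ),
      ∑ x : Fin n, ∑ y : Fin n, adjR G x y * g x = (d:ℝ) * ∑ x : Fin n, g x := by
    intro g
    rw [Finset.mul_sum]
    refine Finset.sum_congr rfl fun x _ => ?_
    rw [← Finset.sum_mul, hdegrow x]
  have hcolsum : ∀ (g : Fin n → ℝ),
      ∑ x : Fin n, ∑ y : Fin n, adjR G x y * g y = (d:ℝ) * ∑ y : Fin n, g y := by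
    intro g
    rw [Finset.sum_comm, Finset.mul_sum]
    refine Finset.sum_congr rfl fun y _ => ?_
    rw [← Finset.sum_mul, hdegcol y]
  have hMwLx : φ*(d:ℝ)*(∑ x : Fin n, Mw (Lx x)) ≤ φ*(d:ℝ)*(n:ℝ) + F + F := by
    have hb : ∀ x : Fin n, φ*(d:ℝ)* Mw (Lx x) ≤ φ*(d:ℝ)*((Lx x).card : ℝ) + WW (Lx x) := by
      intro x
      simp only [hLxdef]
      exact bound9 (r (cl x)) x
    calc φ*(d:ℝ)*(∑ x : Fin n, Mw (Lx x)) = ∑ x : Fin n, φ*(d:ℝ)* Mw (Lx x) := by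
          rw [Finset.mul_sum]
      _ ≤ ∑ x : Fin n, (φ*(d:ℝ)*((Lx x).card : ℝ) + WW (Lx x)) :=
          Finset.sum_le_sum fun x _ => hb x
      _ = φ*(d:ℝ)*(∑ x : Fin n, ((Lx x).card : ℝ)) + ∑ x : Fin n, WW (Lx x) := by
          rw [Finset.sum_add_distrib, Finset.mul_sum]
      _ ≤ (φ*(d:ℝ)*(n:ℝ) + F) + F := add_le_add hBagg (hSW Lx hLxmem)
      _ = φ*(d:ℝ)*(n:ℝ) + F + F := by ring
  have hXY : φ*(d:ℝ)*(∑ x : Fin n, ∑ y : Fin n, adjR G x y * Mw (lcaS TG x y))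
      ≤ φ*(d:ℝ)*F + (d:ℝ)*F := by
    calc φ*(d:ℝ)*(∑ x : Fin n, ∑ y : Fin n, adjR G x y * Mw (lcaS TG x y))
        = ∑ x : Fin n, ∑ y : Fin n, adjR G x y * (φ*(d:ℝ)* Mw (lcaS TG x y)) := by
          rw [Finset.mul_sum]
          refine Finset.sum_congr rfl fun x _ => ?_
          rw [Finset.mul_sum]
          exact Finset.sum_congr rfl fun y _ => by ring
      _ ≤ ∑ x : Fin n, ∑ y : Fin n, adjR G x y *
            (φ*(d:ℝ)*((lcaS TG x y).card : ℝ) + WW (lcaS TG x y)) := by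
          refine Finset.sum_le_sum fun x _ => Finset.sum_le_sum fun y _ =>
            mul_le_mul_of_nonneg_left (bound9 x y) (adjR_nonneg G x y)
      _ = φ*(d:ℝ)*(∑ x : Fin n, ∑ y : Fin n, adjR G x y * ((lcaS TG x y).card : ℝ))
            + ∑ x : Fin n, ∑ y : Fin n, adjR G x y * WW (lcaS TG x y) := by
          rw [Finset.mul_sum, ← Finset.sum_add_distrib]
          refine Finset.sum_congr rfl fun x _ => ?_
          rw [Finset.mul_sum, ← Finset.sum_add_distrib]
          exact Finset.sum_congr rfl fun y _ => by ring
      _ ≤ φ*(d:ℝ)*F + (d:ℝ)*F := by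
          rw [← hFdef]
          have h := hWWswap
          linarith
  have hineq2core : φ * (2 * WCOST (contrEdgeW G C) m TQ) ≤ 8*F := by
    have hS3 : φ*(d:ℝ)*(2 * WCOST (contrEdgeW G C) m TQ) ≤
        φ*(d:ℝ)*(∑ x : Fin n, ∑ y : Fin n, adjR G x y *
          (Mw (Lx x) + Mw (lcaS TG x y) + Mw (Lx y))) :=
      mul_le_mul_of_nonneg_left hchain2 (by positivity)
    have hsplit3 : ∑ x : Fin n, ∑ y : Fin n, adjR G x y *
          (Mw (Lx x) + Mw (lcaS TG x y) + Mw (Lx y))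
        = (∑ x : Fin n, ∑ y : Fin n, adjR G x y * Mw (Lx x))
          + (∑ x : Fin n, ∑ y : Fin n, adjR G x y * Mw (lcaS TG x y))
          + (∑ x : Fin n, ∑ y : Fin n, adjR G x y * Mw (Lx y)) := by
      rw [← Finset.sum_add_distrib, ← Finset.sum_add_distrib]
      refine Finset.sum_congr rfl fun x _ => ?_
      rw [← Finset.sum_add_distrib, ← Finset.sum_add_distrib]
      exact Finset.sum_congr rfl fun y _ => by ring
    have hX : φ*(d:ℝ)*(∑ x : Fin n, ∑ y : Fin n, adjR G x y * Mw (Lx x))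
        ≤ (d:ℝ)*(φ*(d:ℝ)*(n:ℝ) + F + F) := by
      rw [hrowsum (fun x => Mw (Lx x))]
      calc φ*(d:ℝ)*((d:ℝ) * ∑ x : Fin n, Mw (Lx x))
          = (d:ℝ)*(φ*(d:ℝ)*(∑ x : Fin n, Mw (Lx x))) := by ring
        _ ≤ (d:ℝ)*(φ*(d:ℝ)*(n:ℝ) + F + F) :=
            mul_le_mul_of_nonneg_left hMwLx (by positivity)
    have hY : φ*(d:ℝ)*(∑ x : Fin n, ∑ y : Fin n, adjR G x y * Mw (Lx y))
        ≤ (d:ℝ)*(φ*(d:ℝ)*(n:ℝ) + F + F) := by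
      rw [hcolsum (fun y => Mw (Lx y))]
      calc φ*(d:ℝ)*((d:ℝ) * ∑ y : Fin n, Mw (Lx y))
          = (d:ℝ)*(φ*(d:ℝ)*(∑ y : Fin n, Mw (Lx y))) := by ring
        _ ≤ (d:ℝ)*(φ*(d:ℝ)*(n:ℝ) + F + F) :=
            mul_le_mul_of_nonneg_left hMwLx (by positivity)
    have hphidn : φ*(d:ℝ)*(n:ℝ) ≤ F := by
      have hdn0 : (0:ℝ) ≤ (d:ℝ)*(n:ℝ) := by positivity
      have h1 : φ*((d:ℝ)*(n:ℝ)) ≤ (d:ℝ)*(n:ℝ) := mul_le_of_le_one_left hdn0 hφ1.le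
      calc φ*(d:ℝ)*(n:ℝ) = φ*((d:ℝ)*(n:ℝ)) := by ring
        _ ≤ (d:ℝ)*(n:ℝ) := h1
        _ ≤ F := hFdn
    have hdF0 : (0:ℝ) ≤ (d:ℝ)*F := by positivity
    have hφF : φ*((d:ℝ)*F) ≤ (d:ℝ)*F := mul_le_of_le_one_left hdF0 hφ1.le
    have htot : φ*(d:ℝ)*(2 * WCOST (contrEdgeW G C) m TQ) ≤ 8*((d:ℝ)*F) := by
      calc φ*(d:ℝ)*(2 * WCOST (contrEdgeW G C) m TQ)
          ≤ φ*(d:ℝ)*(∑ x : Fin n, ∑ y : Fin n, adjR G x y *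
              (Mw (Lx x) + Mw (lcaS TG x y) + Mw (Lx y))) := hS3
        _ = φ*(d:ℝ)*(∑ x : Fin n, ∑ y : Fin n, adjR G x y * Mw (Lx x))
            + φ*(d:ℝ)*(∑ x : Fin n, ∑ y : Fin n, adjR G x y * Mw (lcaS TG x y))
            + φ*(d:ℝ)*(∑ x : Fin n, ∑ y : Fin n, adjR G x y * Mw (Lx y)) := by
            rw [hsplit3]; ring
        _ ≤ ((d:ℝ)*(φ*(d:ℝ)*(n:ℝ) + F + F)) + (φ*(d:ℝ)*F + (d:ℝ)*F)
            + ((d:ℝ)*(φ*(d:ℝ)*(n:ℝ) + F + F)) := by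
            linarith [hX, hXY, hY]
        _ ≤ ((d:ℝ)*(F + F + F)) + ((d:ℝ)*F + (d:ℝ)*F) + ((d:ℝ)*(F + F + F)) := by
            have h2 : (d:ℝ)*(φ*(d:ℝ)*(n:ℝ) + F + F) ≤ (d:ℝ)*(F + F + F) :=
              mul_le_mul_of_nonneg_left (by linarith [hphidn]) (by positivity)
            have h3 : φ*(d:ℝ)*F ≤ (d:ℝ)*F := by
              calc φ*(d:ℝ)*F = φ*((d:ℝ)*F) := by ring
                _ ≤ (d:ℝ)*F := hφF
            linarith
        _ = 8*((d:ℝ)*F) := by ring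
    have hrw : (d:ℝ)*(φ*(2 * WCOST (contrEdgeW G C) m TQ)) ≤ (d:ℝ)*(8*F) := by
      calc (d:ℝ)*(φ*(2 * WCOST (contrEdgeW G C) m TQ))
          = φ*(d:ℝ)*(2 * WCOST (contrEdgeW G C) m TQ) := by ring
        _ ≤ 8*((d:ℝ)*F) := htot
        _ = (d:ℝ)*(8*F) := by ring
    exact (mul_le_mul_iff_right₀ hdpos).mp hrw
  have hWQ4 : φ * WCOST (contrEdgeW G C) m TQ ≤ 4*F := by linarith [hineq2core]
  have hm2 : φ * ((d:ℝ) * ∑ i : Fin k, m i ^ 2) ≤ 4*F := by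
    have hphidn : φ*(d:ℝ)*(n:ℝ) ≤ F := by
      have hdn0 : (0:ℝ) ≤ (d:ℝ)*(n:ℝ) := by positivity
      have h1 : φ*((d:ℝ)*(n:ℝ)) ≤ (d:ℝ)*(n:ℝ) := mul_le_of_le_one_left hdn0 hφ1.le
      calc φ*(d:ℝ)*(n:ℝ) = φ*((d:ℝ)*(n:ℝ)) := by ring
        _ ≤ (d:ℝ)*(n:ℝ) := h1
        _ ≤ F := hFdn
    have h1 : φ*(d:ℝ)*(∑ i : Fin k, m i ^ 2) ≤ 4*F := by
      calc φ*(d:ℝ)*(∑ i : Fin k, m i ^ 2) ≤ 2*(φ*(d:ℝ)*(n:ℝ) + F) := hChainAgg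
        _ ≤ 4*F := by linarith
    calc φ * ((d:ℝ) * ∑ i : Fin k, m i ^ 2) = φ*(d:ℝ)*(∑ i : Fin k, m i ^ 2) := by ring
      _ ≤ 4*F := h1
  have hineq2 : WCOST (contrEdgeW G C) m TQ + (d:ℝ) * ∑ i : Fin k, m i ^ 2
      ≤ 100 / φ * COST G TG := by
    rw [hCOSTF]
    rw [← mul_le_mul_iff_right₀ hφ]
    have heq : φ * (100 / φ * (F/2)) = 50 * F := by
      field_simp
      ring
    rw [heq, mul_add]
    have h50 : (8:ℝ)*F ≤ 50*F := by linarith [hF0]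
    linarith [hWQ4, hm2]
  -- ============ first inequality: via the grafted tree ============
  have hn1 : 0 < n := by
    obtain ⟨v, _⟩ := hCne ⟨0, by omega⟩
    exact v.pos
  set v0 : Fin n := ⟨0, hn1⟩ with hv0def
  set g : Fin k → BTree (Fin n) := fun i => treeOf (C i) v0 with hgdef
  have hgspec : ∀ i, (g i).leaves = C i ∧ (g i).Proper :=
    fun i => treeOf_spec (C i) v0 (hCne i)
  have hgdisj : ∀ i j, i ≠ j → Disjoint (g i).leaves (g j).leaves := by
    intro i j hij
    rw [(hgspec i).1, (hgspec j).1, Finset.disjoint_left]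
    intro a ha ha'
    exact hij ((hcluniq a i ha).trans (hcluniq a j ha').symm)
  set Tc : BTree (Fin n) := graft g TQ with hTcdef
  have hTcleaves : Tc.leaves = Finset.univ := by
    apply Finset.eq_univ_of_forall
    intro x
    exact mem_graft_of g (by rw [hTQleaves]; exact Finset.mem_univ (cl x))
      (by rw [(hgspec (cl x)).1]; exact hclmem x)
  have hTcproper : Tc.Proper := graft_proper g (fun i => (hgspec i).2) hgdisj TQ hTQproper
  have hcostle : COST G TG ≤ COST G Tc := hTGopt Tc hTcleaves hTcproper
  have hcross : ∀ x y : Fin n, cl x ≠ cl y →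
      lcaW (fun _ => (1:ℝ)) Tc x y = lcaW m TQ (cl x) (cl y) := by
    intro x y hxy
    have h := graft_lcaW_cross g (fun _ => (1:ℝ)) hgdisj TQ hxy
      (by rw [hTQleaves]; exact Finset.mem_univ _) (by rw [hTQleaves]; exact Finset.mem_univ _)
      (by rw [(hgspec (cl x)).1]; exact hclmem x) (by rw [(hgspec (cl y)).1]; exact hclmem y)
    rw [h]
    have hfeq : (fun ℓ => wsum (fun _ => (1:ℝ)) (g ℓ).leaves) = m := by
      funext ℓ
      rw [(hgspec ℓ).1]
      simp [wsum, hmdef]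
    rw [hfeq]
  have hintra : ∀ x y : Fin n, cl x = cl y →
      lcaW (fun _ => (1:ℝ)) Tc x y ≤ m (cl x) := by
    intro x y hxy
    have h := graft_lcaW_intra g (fun _ => (1:ℝ)) (fun _ => by norm_num) hgdisj TQ
      (i := cl x) (by rw [hTQleaves]; exact Finset.mem_univ _)
      (by rw [(hgspec (cl x)).1]; exact hclmem x)
      (by rw [(hgspec (cl x)).1, hxy]; exact hclmem y)
    calc lcaW (fun _ => (1:ℝ)) Tc x y ≤ wsum (fun _ => (1:ℝ)) (g (cl x)).leaves := h
      _ = m (cl x) := by rw [(hgspec (cl x)).1]; simp [wsum, hmdef]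
  have h2costTc : 2 * COST G Tc
      = ∑ x : Fin n, ∑ y : Fin n, adjR G x y * lcaW (fun _ => (1:ℝ)) Tc x y := by
    unfold COST adjR
    ring
  have hlcaWnn : ∀ x y : Fin n, 0 ≤ lcaW (fun _ => (1:ℝ)) Tc x y :=
    fun x y => lcaW_nonneg (fun _ => by norm_num) Tc x y
  -- split into cross and intra parts
  have hsplitCost : ∑ x : Fin n, ∑ y : Fin n, adjR G x y * lcaW (fun _ => (1:ℝ)) Tc x y
      = (∑ x : Fin n, ∑ y : Fin n,
          (if cl x = cl y then 0 else adjR G x y * lcaW m TQ (cl x) (cl y)))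
        + (∑ x : Fin n, ∑ y : Fin n,
          (if cl x = cl y then adjR G x y * lcaW (fun _ => (1:ℝ)) Tc x y else 0)) := by
    rw [← Finset.sum_add_distrib]
    refine Finset.sum_congr rfl fun x _ => ?_
    rw [← Finset.sum_add_distrib]
    refine Finset.sum_congr rfl fun y _ => ?_
    by_cases hxy : cl x = cl y
    · rw [if_pos hxy, if_pos hxy, zero_add]
    · rw [if_neg hxy, if_neg hxy, add_zero, hcross x y hxy]
  have hcrosseq : ∑ x : Fin n, ∑ y : Fin n,
        (if cl x = cl y then 0 else adjR G x y * lcaW m TQ (cl x) (cl y))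
      = ∑ i : Fin k, ∑ j : Fin k, contrEdgeW G C i j * lcaW m TQ i j := by
    have h1 : ∀ (i : Fin k) (x : Fin n), ∑ y : Fin n,
        (if i = cl y then 0 else adjR G x y * lcaW m TQ i (cl y))
        = ∑ j : Fin k, ∑ y ∈ C j, (if i = j then 0 else adjR G x y * lcaW m TQ i j) := by
      intro i x
      exact (part_sum2 C hpart'
        (fun y j => if i = j then 0 else adjR G x y * lcaW m TQ i j) cl
        (fun v j hv => hcluniq v j hv)).symm
    calc ∑ x : Fin n, ∑ y : Fin n,
          (if cl x = cl y then 0 else adjR G x y * lcaW m TQ (cl x) (cl y))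
        = ∑ i : Fin k, ∑ x ∈ C i, ∑ y : Fin n,
            (if i = cl y then 0 else adjR G x y * lcaW m TQ i (cl y)) :=
          (part_sum2 C hpart'
            (fun x i => ∑ y : Fin n,
              (if i = cl y then 0 else adjR G x y * lcaW m TQ i (cl y))) cl
            (fun v j hv => hcluniq v j hv)).symm
      _ = ∑ i : Fin k, ∑ x ∈ C i, ∑ j : Fin k, ∑ y ∈ C j,
            (if i = j then 0 else adjR G x y * lcaW m TQ i j) := by
          refine Finset.sum_congr rfl fun i _ => Finset.sum_congr rfl fun x _ => h1 i x
      _ = ∑ i : Fin k, ∑ j : Fin k, ∑ x ∈ C i, ∑ y ∈ C j,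
            (if i = j then 0 else adjR G x y * lcaW m TQ i j) := by
          refine Finset.sum_congr rfl fun i _ => ?_
          rw [Finset.sum_comm]
      _ = ∑ i : Fin k, ∑ j : Fin k, contrEdgeW G C i j * lcaW m TQ i j := by
          refine Finset.sum_congr rfl fun i _ => Finset.sum_congr rfl fun j _ => ?_
          by_cases hij : i = j
          · subst hij
            unfold contrEdgeW
            rw [if_pos rfl, zero_mul]
            exact Finset.sum_eq_zero fun x _ => Finset.sum_eq_zero fun y _ => by
              rw [if_pos rfl]
          · unfold contrEdgeW
            rw [if_neg hij, hcast, Finset.sum_mul]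
            refine Finset.sum_congr rfl fun x _ => ?_
            rw [Finset.sum_mul]
            exact Finset.sum_congr rfl fun y _ => by rw [if_neg hij]
  have hintrale : ∑ x : Fin n, ∑ y : Fin n,
        (if cl x = cl y then adjR G x y * lcaW (fun _ => (1:ℝ)) Tc x y else 0)
      ≤ (d:ℝ) * ∑ i : Fin k, m i ^ 2 := by
    have hstep : ∀ x : Fin n, ∑ y : Fin n,
        (if cl x = cl y then adjR G x y * lcaW (fun _ => (1:ℝ)) Tc x y else 0)
        ≤ (d:ℝ) * m (cl x) := by
      intro x
      calc ∑ y : Fin n, (if cl x = cl y then adjR G x y * lcaW (fun _ => (1:ℝ)) Tc x y else 0)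
          ≤ ∑ y : Fin n, adjR G x y * m (cl x) := by
            refine Finset.sum_le_sum fun y _ => ?_
            by_cases hxy : cl x = cl y
            · rw [if_pos hxy]
              exact mul_le_mul_of_nonneg_left (hintra x y hxy) (adjR_nonneg G x y)
            · rw [if_neg hxy]
              exact mul_nonneg (adjR_nonneg G x y) (hmnn (cl x))
        _ = (d:ℝ) * m (cl x) := by rw [← Finset.sum_mul, hdegrow x]
    calc ∑ x : Fin n, ∑ y : Fin n,
          (if cl x = cl y then adjR G x y * lcaW (fun _ => (1:ℝ)) Tc x y else 0)
        ≤ ∑ x : Fin n, (d:ℝ) * m (cl x) := Finset.sum_le_sum fun x _ => hstep x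
      _ = ∑ i : Fin k, ∑ x ∈ C i, (d:ℝ) * m i := by
          exact (part_sum2 C hpart' (fun x i => (d:ℝ) * m i) cl
            (fun v j hv => hcluniq v j hv)).symm
      _ = (d:ℝ) * ∑ i : Fin k, m i ^ 2 := by
          rw [Finset.mul_sum]
          refine Finset.sum_congr rfl fun i _ => ?_
          rw [Finset.sum_const]
          have : m i = ((C i).card : ℝ) := rfl
          rw [this]
          push_cast
          ring
  have hineq1 : COST G TG ≤ WCOST (contrEdgeW G C) m TQ + (d:ℝ) * ∑ i : Fin k, m i ^ 2 := by
    have h2 : 2 * COST G Tc ≤ 2 * WCOST (contrEdgeW G C) m TQ + (d:ℝ) * ∑ i : Fin k, m i ^ 2 := by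
      rw [h2costTc, hsplitCost, hcrosseq, ← hW2 TQ]
      linarith [hintrale]
    have hnn : 0 ≤ (d:ℝ) * ∑ i : Fin k, m i ^ 2 := by
      refine mul_nonneg (Nat.cast_nonneg _) (Finset.sum_nonneg fun i _ => by positivity)
    linarith [hcostle]
  exact ⟨hineq1, hineq2⟩
end
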